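/- arXiv:1306.1322 — 10 statements merged into one kernel-verified Lean document; each statement's English description precedes it below -/
import Mathlib

section
/- For all real numbers α, b, c > 0, the function g(α) = b - (b+c)e^{-cα} + c e^{-(b+c)α} is strictly positive. -/
theorem g_pos (b c : ℝ) (hb : 0 < b) (hc : 0 < c) (α : ℝ) (hα : 0 < α) :
    0 < b - (b + c) * Real.exp (-c * α) + c * Real.exp (-(b + c) * α) := by
  have hsplit : Real.exp (-(b + c) * α) = Real.exp (-b * α) * Real.exp (-c * α) := by
    rw [← Real.exp_add]; ring_nf
  have h2 : -b * α + 1 < Real.exp (-b * α) :=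
    Real.add_one_lt_exp (by nlinarith : -b * α < 0).ne
  have h3 : c * α + 1 < Real.exp (c * α) :=
    Real.add_one_lt_exp (by positivity : (0:ℝ) < c * α).ne'
  have hx : 0 < Real.exp (-c * α) := Real.exp_pos _
  have hmul : Real.exp (-c * α) * Real.exp (c * α) = 1 := by
    rw [← Real.exp_add]; ring_nf; exact Real.exp_zero
  rw [hsplit]
  nlinarith [mul_pos hc hx, mul_lt_mul_of_pos_left h3 hx,
    mul_lt_mul_of_pos_left h2 (mul_pos hc hx)]
end

section
/- For all real a and all α, b, c > 0, ((a+b)e^{-αb} - a)/(1 - e^{-αb}) > ((a+b+c)e^{-αc} - (a+b))/(1 - e^{-αc}). -/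
theorem ratio_ineq (a : ℝ) (α b c : ℝ) (hα : 0 < α) (hb : 0 < b) (hc : 0 < c) :
    ((a + b + c) * Real.exp (-α * c) - (a + b)) / (1 - Real.exp (-α * c)) <
      ((a + b) * Real.exp (-α * b) - a) / (1 - Real.exp (-α * b)) := by
  set x := Real.exp (-α * b) with hxdef
  set y := Real.exp (-α * c) with hydef
  have hx0 : 0 < x := Real.exp_pos _
  have hy0 : 0 < y := Real.exp_pos _
  have hx1 : x < 1 := by
    rw [hxdef]
    apply Real.exp_lt_one_iff.mpr
    nlinarith
  have hy1 : y < 1 := by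
    rw [hydef]
    apply Real.exp_lt_one_iff.mpr
    nlinarith
  -- 1 - x < α*b
  have h1 : 1 - x < α * b := by
    have := Real.add_one_lt_exp (x := -α * b) (by nlinarith)
    rw [← hxdef] at this
    linarith
  -- α*c*y ≤ 1 - y
  have h2 : α * c * y ≤ 1 - y := by
    have he : α * c + 1 ≤ Real.exp (α * c) := Real.add_one_le_exp _
    have hmul : y * Real.exp (α * c) = 1 := by
      rw [hydef, ← Real.exp_add]; ring_nf; exact Real.exp_zero
    nlinarith
  rw [div_lt_div_iff₀ (by linarith) (by linarith)]
  -- reduces to b + c*x*y > (b+c)*y, i.e. b*(1-y) > c*y*(1-x)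
  have key : c * y * (1 - x) < b * (1 - y) := by
    calc c * y * (1 - x) < c * y * (α * b) := by
          apply mul_lt_mul_of_pos_left h1 (by positivity)
      _ = b * (α * c * y) := by ring
      _ ≤ b * (1 - y) := mul_le_mul_of_nonneg_left h2 hb.le
  nlinarith [key]
end

section
/- For a strictly decreasing sequence of partial sums A₀ < A₁ < ... (Aₖ = a₁+...+aₖ with aᵢ > 0) and α > 0, the sequence k ↦ (A_{k+1}e^{-αA_{k+1}} - A_k e^{-αA_k})/(e^{-αA_k} - e^{-αA_{k+1}}) is strictly decreasing in k. -/
private lemma ratio_lt (α x y : ℝ) (hα : 0 < α) (hxy : x < y) :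
    (y * Real.exp (-α * y) - x * Real.exp (-α * x)) /
      (Real.exp (-α * x) - Real.exp (-α * y)) < 1 / α - x := by
  have hd : Real.exp (-α * y) < Real.exp (-α * x) := by
    apply Real.exp_lt_exp.2; nlinarith
  have hu : Real.exp (-α * x) = Real.exp (-α * y) * Real.exp (α * (y - x)) := by
    rw [← Real.exp_add]; ring_nf
  have he : α * (y - x) + 1 < Real.exp (α * (y - x)) :=
    Real.add_one_lt_exp (mul_pos hα (sub_pos.2 hxy)).ne'
  have hv : 0 < Real.exp (-α * y) := Real.exp_pos _
  rw [div_lt_iff₀ (by linarith)]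
  have hc : α * (1 / α) = 1 := mul_one_div_cancel hα.ne'
  nlinarith [mul_pos hv (sub_pos.2 he), mul_pos hα hv]

private lemma lt_ratio (α x y : ℝ) (hα : 0 < α) (hxy : x < y) :
    1 / α - y < (y * Real.exp (-α * y) - x * Real.exp (-α * x)) /
      (Real.exp (-α * x) - Real.exp (-α * y)) := by
  have hd : Real.exp (-α * y) < Real.exp (-α * x) := by
    apply Real.exp_lt_exp.2; nlinarith
  have hv : Real.exp (-α * y) = Real.exp (-α * x) * Real.exp (-(α * (y - x))) := by
    rw [← Real.exp_add]; ring_nf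
  have he : -(α * (y - x)) + 1 < Real.exp (-(α * (y - x))) :=
    Real.add_one_lt_exp (neg_lt_zero.2 (mul_pos hα (sub_pos.2 hxy))).ne
  have hu : 0 < Real.exp (-α * x) := Real.exp_pos _
  rw [lt_div_iff₀ (by linarith)]
  have hc : α * (1 / α) = 1 := mul_one_div_cancel hα.ne'
  nlinarith [mul_pos hu (sub_pos.2 he), mul_pos hα hu]

theorem partial_sum_ratio_strict_anti (a : ℕ → ℝ) (ha : ∀ i, 0 < a i) (α : ℝ) (hα : 0 < α)
    (A : ℕ → ℝ) (hA : ∀ k, A k = ∑ i ∈ Finset.range k, a i) (n : ℕ) (hn : 1 ≤ n) :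
    (A (n + 1) * Real.exp (-α * A (n + 1)) - A n * Real.exp (-α * A n)) /
        (Real.exp (-α * A n) - Real.exp (-α * A (n + 1))) <
      (A n * Real.exp (-α * A n) - A (n - 1) * Real.exp (-α * A (n - 1))) /
        (Real.exp (-α * A (n - 1)) - Real.exp (-α * A n)) := by
  have hstep : ∀ k, A k < A (k + 1) := by
    intro k
    rw [hA, hA, Finset.sum_range_succ]
    linarith [ha k]
  have h1 : A (n - 1) < A n := by
    obtain ⟨m, rfl⟩ := Nat.exists_eq_add_of_le hn
    have := hstep m; simpa [Nat.add_comm] using this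
  have h2 : A n < A (n + 1) := hstep n
  calc (A (n + 1) * Real.exp (-α * A (n + 1)) - A n * Real.exp (-α * A n)) /
        (Real.exp (-α * A n) - Real.exp (-α * A (n + 1)))
      < 1 / α - A n := ratio_lt α (A n) (A (n + 1)) hα h2
    _ < _ := lt_ratio α (A (n - 1)) (A n) hα h1
end

section
/- If t₁ ≠ t₂ are positive reals, γ₁, γ₂, α₁, α₂ > 0, and γ₁(1−e^{−2α₁t₁}) = γ₂(1−e^{−2α₂t₁}) and γ₁(1−e^{−2α₁t₂}) = γ₂(1−e^{−2α₂t₂}), then (γ₁, α₁) = (γ₂, α₂). -/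
lemma lemA : StrictMonoOn (fun x => (Real.exp x - 1) / x) (Set.Ioi 0) := by
  apply strictMonoOn_of_deriv_pos (convex_Ioi 0)
  · apply ContinuousOn.div
    · fun_prop
    · fun_prop
    · intro x hx; exact (ne_of_gt hx)
  · intro x hx
    rw [interior_Ioi] at hx
    have hx0 : (0:ℝ) < x := hx
    have hd : HasDerivAt (fun x => (Real.exp x - 1) / x)
        ((Real.exp x * x - (Real.exp x - 1) * 1) / x ^ 2) x :=
      ((Real.hasDerivAt_exp x).sub_const 1).div (hasDerivAt_id x) hx0.ne'
    rw [hd.deriv]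
    have h : 1 - x < Real.exp (-x) := by
      have := Real.add_one_lt_exp (x := -x) (neg_ne_zero.mpr hx0.ne')
      linarith
    have hm : Real.exp (-x) * Real.exp x = 1 := by
      rw [← Real.exp_add]; simp
    have key : Real.exp x - 1 < x * Real.exp x := by
      nlinarith [Real.exp_pos x]
    have : 0 < Real.exp x * x - (Real.exp x - 1) * 1 := by nlinarith
    exact div_pos this (by positivity)

lemma lemH {x y : ℝ} (hx : 0 < x) (hxy : x < y) :
    y / (Real.exp y - 1) < x / (Real.exp x - 1) := by
  have hy : 0 < y := hx.trans hxy
  have hex : 0 < Real.exp x - 1 := by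
    have := Real.add_one_lt_exp hx.ne'; linarith
  have hey : 0 < Real.exp y - 1 := by
    have := Real.add_one_lt_exp hy.ne'; linarith
  have h := lemA hx hy hxy
  simp only at h
  rw [div_lt_div_iff₀ hx hy] at h
  rw [div_lt_div_iff₀ hey hex]
  nlinarith

lemma hasDerivAt_logterm (t : ℝ) (ht : 0 < t) {a : ℝ} (ha : 0 < a) :
    HasDerivAt (fun a => Real.log (1 - Real.exp (-(a * t))))
      (t * Real.exp (-(a * t)) / (1 - Real.exp (-(a * t)))) a := by
  have hlt : Real.exp (-(a * t)) < 1 := by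
    rw [Real.exp_lt_one_iff]; nlinarith
  have h1 : HasDerivAt (fun a : ℝ => 1 - Real.exp (-(a * t)))
      (-(Real.exp (-(a * t)) * -(1 * t))) a :=
    (((hasDerivAt_id a).mul_const t).neg.exp).const_sub 1
  have := h1.log (by linarith)
  convert this using 1
  field_simp

lemma lemG {t₁ t₂ : ℝ} (ht₁ : 0 < t₁) (h12 : t₁ < t₂) :
    StrictAntiOn (fun a => Real.log (1 - Real.exp (-(a * t₂)))
      - Real.log (1 - Real.exp (-(a * t₁)))) (Set.Ioi 0) := by
  have ht₂ : 0 < t₂ := ht₁.trans h12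
  apply strictAntiOn_of_deriv_neg (convex_Ioi 0)
  · apply ContinuousOn.sub
    · apply ContinuousOn.log (by fun_prop)
      intro a ha
      simp only [Set.mem_Ioi] at ha
      have : Real.exp (-(a * t₂)) < 1 := by
        rw [Real.exp_lt_one_iff]; nlinarith
      linarith
    · apply ContinuousOn.log (by fun_prop)
      intro a ha
      simp only [Set.mem_Ioi] at ha
      have : Real.exp (-(a * t₁)) < 1 := by
        rw [Real.exp_lt_one_iff]; nlinarith
      linarith
  · intro a ha
    rw [interior_Ioi] at ha
    have ha0 : (0:ℝ) < a := ha
    have hd : HasDerivAt (fun a => Real.log (1 - Real.exp (-(a * t₂)))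
        - Real.log (1 - Real.exp (-(a * t₁))))
        (t₂ * Real.exp (-(a * t₂)) / (1 - Real.exp (-(a * t₂)))
          - t₁ * Real.exp (-(a * t₁)) / (1 - Real.exp (-(a * t₁)))) a :=
      (hasDerivAt_logterm t₂ ht₂ ha0).sub (hasDerivAt_logterm t₁ ht₁ ha0)
    rw [hd.deriv]
    -- rewrite each term as t/(e^{at}-1)
    have key : ∀ t : ℝ, 0 < t →
        t * Real.exp (-(a * t)) / (1 - Real.exp (-(a * t))) = t / (Real.exp (a * t) - 1) := by
      intro t ht
      have h1 : Real.exp (-(a*t)) * Real.exp (a*t) = 1 := by rw [← Real.exp_add]; simp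
      have h2 : Real.exp (-(a*t)) < 1 := by rw [Real.exp_lt_one_iff]; nlinarith
      have h3 : 1 < Real.exp (a*t) := by
        have := Real.add_one_lt_exp (mul_pos ha0 ht).ne'
        have := mul_pos ha0 ht
        linarith
      rw [div_eq_div_iff (by linarith) (by linarith)]
      nlinarith
    rw [key t₁ ht₁, key t₂ ht₂]
    have h := lemH (mul_pos ha0 ht₁) (by nlinarith : a * t₁ < a * t₂)
    have h' : (a * t₂) / (Real.exp (a*t₂) - 1) < (a * t₁) / (Real.exp (a*t₁) - 1) := h
    have hey : 0 < Real.exp (a*t₂) - 1 := by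
      have := Real.add_one_lt_exp (mul_pos ha0 ht₂).ne'
      have := mul_pos ha0 ht₂; linarith
    have hex : 0 < Real.exp (a*t₁) - 1 := by
      have := Real.add_one_lt_exp (mul_pos ha0 ht₁).ne'
      have := mul_pos ha0 ht₁; linarith
    rw [mul_div_assoc, mul_div_assoc] at h'
    have := (mul_lt_mul_iff_right₀ ha0).mp h'
    linarith

theorem identifiability_two_times (t₁ t₂ γ₁ γ₂ α₁ α₂ : ℝ)
    (ht₁ : 0 < t₁) (ht₂ : 0 < t₂) (hne : t₁ ≠ t₂)
    (hγ₁ : 0 < γ₁) (hγ₂ : 0 < γ₂) (hα₁ : 0 < α₁) (hα₂ : 0 < α₂)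
    (h1 : γ₁ * (1 - Real.exp (-2 * α₁ * t₁)) = γ₂ * (1 - Real.exp (-2 * α₂ * t₁)))
    (h2 : γ₁ * (1 - Real.exp (-2 * α₁ * t₂)) = γ₂ * (1 - Real.exp (-2 * α₂ * t₂))) :
    γ₁ = γ₂ ∧ α₁ = α₂ := by
  wlog h12 : t₁ < t₂ generalizing t₁ t₂
  · exact this t₂ t₁ ht₂ ht₁ (Ne.symm hne) h2 h1 (lt_of_le_of_ne (not_lt.mp h12) (Ne.symm hne))
  -- positivity of the factors
  have pos : ∀ α t : ℝ, 0 < α → 0 < t → 0 < 1 - Real.exp (-(2 * α * t)) := by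
    intro α t hα ht
    have : Real.exp (-(2 * α * t)) < 1 := by
      rw [Real.exp_lt_one_iff]; nlinarith
    linarith
  have e1 : ∀ α t : ℝ, (-2 * α * t) = -((2*α) * t) := by intros; ring
  rw [e1, e1] at h1 h2
  have A1 := pos α₁ t₁ hα₁ ht₁
  have A2 := pos α₁ t₂ hα₁ ht₂
  have B1 := pos α₂ t₁ hα₂ ht₁
  have B2 := pos α₂ t₂ hα₂ ht₂
  rw [show (2*α₁*t₁ : ℝ) = (2*α₁)*t₁ by ring] at A1
  rw [show (2*α₁*t₂ : ℝ) = (2*α₁)*t₂ by ring] at A2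
  rw [show (2*α₂*t₁ : ℝ) = (2*α₂)*t₁ by ring] at B1
  rw [show (2*α₂*t₂ : ℝ) = (2*α₂)*t₂ by ring] at B2
  -- log equations
  have l1 : Real.log γ₁ + Real.log (1 - Real.exp (-(2*α₁ * t₁)))
      = Real.log γ₂ + Real.log (1 - Real.exp (-(2*α₂ * t₁))) := by
    rw [← Real.log_mul hγ₁.ne' A1.ne', ← Real.log_mul hγ₂.ne' B1.ne', h1]
  have l2 : Real.log γ₁ + Real.log (1 - Real.exp (-(2*α₁ * t₂)))
      = Real.log γ₂ + Real.log (1 - Real.exp (-(2*α₂ * t₂))) := by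
    rw [← Real.log_mul hγ₁.ne' A2.ne', ← Real.log_mul hγ₂.ne' B2.ne', h2]
  have geq : Real.log (1 - Real.exp (-((2*α₁) * t₂))) - Real.log (1 - Real.exp (-((2*α₁) * t₁)))
      = Real.log (1 - Real.exp (-((2*α₂) * t₂))) - Real.log (1 - Real.exp (-((2*α₂) * t₁))) := by
    linarith
  have hinj := (lemG ht₁ h12).injOn
  have hmem1 : (2*α₁ : ℝ) ∈ Set.Ioi (0:ℝ) := by simp; positivity
  have hmem2 : (2*α₂ : ℝ) ∈ Set.Ioi (0:ℝ) := by simp; positivity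
  have hα : α₁ = α₂ := by
    have := hinj hmem1 hmem2 geq
    linarith
  subst hα
  refine ⟨?_, rfl⟩
  exact mul_right_cancel₀ A1.ne' h1
end

section
/- If γ₁, γ₂, α₁, α₂ > 0, t₂ > 0, and γ₁α₁ = γ₂α₂ and γ₁(1−e^{−2α₁t₂}) = γ₂(1−e^{−2α₂t₂}), then (γ₁, α₁) = (γ₂, α₂). -/
open Real

lemma aux_strictAntiOn : StrictAntiOn (fun x : ℝ => (1 - Real.exp (-x)) / x) (Set.Ioi 0) := by
  have hderiv : ∀ x ∈ interior (Set.Ioi (0:ℝ)),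
      HasDerivAt (fun x : ℝ => (1 - Real.exp (-x)) / x)
        ((Real.exp (-x) * x - (1 - Real.exp (-x)) * 1) / x ^ 2) x := by
    intro x hx
    rw [interior_Ioi] at hx
    have hx0 : x ≠ 0 := ne_of_gt hx
    have h1 : HasDerivAt (fun x : ℝ => 1 - Real.exp (-x)) (Real.exp (-x)) x := by
      have := (Real.hasDerivAt_exp (-x)).comp x (hasDerivAt_neg x)
      exact ((hasDerivAt_const x (1:ℝ)).sub (hasDerivAt_neg x).exp).congr_deriv (by simp)
    exact h1.div (hasDerivAt_id x) hx0
  apply strictAntiOn_of_hasDerivWithinAt_neg (convex_Ioi 0)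
  · apply ContinuousOn.div
    · exact (continuous_const.sub (Real.continuous_exp.comp continuous_neg)).continuousOn
    · exact continuous_id.continuousOn
    · intro x hx; exact ne_of_gt hx
  · intro x hx; exact ((hderiv x hx).hasDerivWithinAt)
  · intro x hx
    rw [interior_Ioi] at hx
    have hx0 : (0:ℝ) < x := hx
    have key : Real.exp (-x) * x - (1 - Real.exp (-x)) * 1 < 0 := by
      have h := Real.add_one_lt_exp (ne_of_gt hx0)
      have hexp : Real.exp (-x) = (Real.exp x)⁻¹ := by rw [Real.exp_neg]
      have hepos : (0:ℝ) < Real.exp x := Real.exp_pos x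
      rw [hexp]
      rw [sub_neg, mul_one]
      have : (x + 1) * (Real.exp x)⁻¹ < 1 := by
        rw [mul_inv_lt_iff₀ hepos, one_mul]; exact h
      nlinarith [inv_pos.mpr hepos]
    exact div_neg_of_neg_of_pos key (by positivity)

theorem identifiability_time_zero (t₂ γ₁ γ₂ α₁ α₂ : ℝ) (ht₂ : 0 < t₂)
    (hγ₁ : 0 < γ₁) (hγ₂ : 0 < γ₂) (hα₁ : 0 < α₁) (hα₂ : 0 < α₂)
    (h0 : γ₁ * α₁ = γ₂ * α₂)
    (h2 : γ₁ * (1 - Real.exp (-2 * α₁ * t₂)) = γ₂ * (1 - Real.exp (-2 * α₂ * t₂))) :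
    γ₁ = γ₂ ∧ α₁ = α₂ := by
  have hx1 : (0:ℝ) < 2 * α₁ * t₂ := by positivity
  have hx2 : (0:ℝ) < 2 * α₂ * t₂ := by positivity
  have hfeq : (1 - Real.exp (-(2 * α₁ * t₂))) / (2 * α₁ * t₂)
      = (1 - Real.exp (-(2 * α₂ * t₂))) / (2 * α₂ * t₂) := by
    have e1 : -(2 * α₁ * t₂) = -2 * α₁ * t₂ := by ring
    have e2 : -(2 * α₂ * t₂) = -2 * α₂ * t₂ := by ring
    rw [e1, e2]
    rw [div_eq_div_iff (by positivity) (by positivity)]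
    have step : γ₁ * ((1 - Real.exp (-2 * α₁ * t₂)) * α₂) =
        γ₁ * ((1 - Real.exp (-2 * α₂ * t₂)) * α₁) := by
      calc γ₁ * ((1 - Real.exp (-2 * α₁ * t₂)) * α₂)
          = (γ₁ * (1 - Real.exp (-2 * α₁ * t₂))) * α₂ := by ring
        _ = (γ₂ * (1 - Real.exp (-2 * α₂ * t₂))) * α₂ := by rw [h2]
        _ = (γ₂ * α₂) * (1 - Real.exp (-2 * α₂ * t₂)) := by ring
        _ = (γ₁ * α₁) * (1 - Real.exp (-2 * α₂ * t₂)) := by rw [h0]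
        _ = γ₁ * ((1 - Real.exp (-2 * α₂ * t₂)) * α₁) := by ring
    have := mul_left_cancel₀ (ne_of_gt hγ₁) step
    nlinarith [this]
  have heq : 2 * α₁ * t₂ = 2 * α₂ * t₂ :=
    aux_strictAntiOn.injOn hx1 hx2 hfeq
  have hα : α₁ = α₂ := by
    have := mul_right_cancel₀ (ne_of_gt ht₂) heq
    linarith
  have hγ : γ₁ = γ₂ := by
    subst hα
    exact mul_right_cancel₀ (ne_of_gt hα₁) h0
  exact ⟨hγ, hα⟩
end

section
/- For the OU covariance matrix V_α on an ultrametric tree of height T, every pair (i,j) of leaves satisfies V_{ij} = e^{-α d_{ij}} ≥ e^{-2αT}, where d_{ij} ≤ 2T is the tree distance; consequently V_α - e^{-2αT} J is positive semidefinite, where J is the all-ones matrix. -/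
open Matrix Real
open MeasureTheory

lemma aux_sum_equiv_nonneg {n : ℕ} (x : Fin n → ℝ) (r : Fin n → Fin n → Prop)
    [DecidableRel r] (h : Equivalence r) :
    0 ≤ ∑ i, ∑ j, (if r i j then x i * x j else 0) := by
  let s : Setoid (Fin n) := ⟨r, h⟩
  letI : DecidableRel s.r := ‹DecidableRel r›
  have key : ∀ i j : Fin n, r i j ↔ (Quotient.mk s i = Quotient.mk s j) := by
    intro i j; rw [Quotient.eq]; rfl
  have heq : ∑ i, ∑ j, (if r i j then x i * x j else 0)
      = ∑ q : Quotient s,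
          (∑ i ∈ Finset.univ.filter (fun i => Quotient.mk s i = q), x i) ^ 2 := by
    rw [← Finset.sum_fiberwise Finset.univ (fun i => Quotient.mk s i)
      (fun i => ∑ j, (if r i j then x i * x j else 0))]
    refine Finset.sum_congr rfl fun q _ => ?_
    rw [sq, Finset.sum_mul_sum]
    refine Finset.sum_congr rfl fun i hi => ?_
    simp only [Finset.mem_filter] at hi
    rw [Finset.sum_filter]
    refine Finset.sum_congr rfl fun j _ => ?_
    have : r i j ↔ (Quotient.mk s j = q) := by
      rw [key i j, hi.2, eq_comm]
    simp [this]
  rw [heq]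
  exact Finset.sum_nonneg fun q _ => sq_nonneg _

lemma aux_integral_rep (α T a : ℝ) (hα : 0 < α) (ha : 0 ≤ a) (haT : a ≤ 2 * T) :
    Real.exp (-α * a) - Real.exp (-2 * α * T)
      = ∫ t in Set.Ioc (0:ℝ) (2*T), Set.indicator (Set.Ioi a)
          (fun t => α * Real.exp (-α * t)) t := by
  rw [MeasureTheory.integral_indicator measurableSet_Ioi,
    MeasureTheory.Measure.restrict_restrict measurableSet_Ioi]
  have hs : Set.Ioi a ∩ Set.Ioc 0 (2*T) = Set.Ioc a (2*T) := by
    ext t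
    simp only [Set.mem_inter_iff, Set.mem_Ioi, Set.mem_Ioc, Set.mem_Ioc]
    constructor
    · rintro ⟨h1, _, h3⟩; exact ⟨h1, h3⟩
    · rintro ⟨h1, h2⟩; exact ⟨h1, lt_of_le_of_lt ha h1, h2⟩
  rw [hs, ← intervalIntegral.integral_of_le haT]
  have hderiv : ∀ t ∈ Set.uIcc a (2*T), HasDerivAt (fun u => -Real.exp (-α * u))
      (α * Real.exp (-α * t)) t := by
    intro t _
    have h1 : HasDerivAt (fun u : ℝ => -α * u) (-α) t := by
      simpa using (hasDerivAt_id t).const_mul (-α)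
    have h2 : HasDerivAt (fun u : ℝ => Real.exp (-α * u))
        (Real.exp (-α * t) * (-α)) t := h1.exp
    have := h2.neg
    convert (show HasDerivAt (fun u => -Real.exp (-α * u)) (-(Real.exp (-α * t) * -α)) t from this) using 1; ring
  have hint : IntervalIntegrable (fun t => α * Real.exp (-α * t)) volume a (2*T) :=
    (continuous_const.mul ((continuous_const.mul continuous_id).rexp)).intervalIntegrable _ _
  rw [intervalIntegral.integral_eq_sub_of_hasDerivAt hderiv hint]
  ring

/-- For an ultrametric tree distance `d` on the leaves (finite ultrametric
spaces are exactly those realizable by ultrametric trees), of height `T` (so `d i j ≤ 2T`),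
the OU covariance matrix `V_ij = exp (-α d_ij)` dominates `exp (-2αT) 𝟙𝟙ᵗ`. -/
theorem ou_cov_psd_dominates (n : ℕ) (d : Fin n → Fin n → ℝ) (T α : ℝ)
    (hT : 0 ≤ T) (hα : 0 < α)
    (hd0 : ∀ i, d i i = 0)
    (hdsymm : ∀ i j, d i j = d j i)
    (hdnn : ∀ i j, 0 ≤ d i j)
    (hultra : ∀ i j k, d i j ≤ max (d i k) (d k j))
    (hheight : ∀ i j, d i j ≤ 2 * T) :
    (Matrix.of (fun i j => Real.exp (-α * d i j)) -
      Real.exp (-2 * α * T) • Matrix.of (fun _ _ : Fin n => (1 : ℝ))).PosSemidef := by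
  refine Matrix.PosSemidef.of_dotProduct_mulVec_nonneg ?_ ?_
  · -- Hermitian
    ext i j
    simp only [Matrix.conjTranspose_apply, Matrix.sub_apply, Matrix.smul_apply,
      Matrix.of_apply, smul_eq_mul, mul_one, star, RCLike.star_def]
    rw [hdsymm]
  · intro x
    -- rewrite quadratic form as double sum
    have hquad : (star x) ⬝ᵥ ((Matrix.of (fun i j => Real.exp (-α * d i j)) -
        Real.exp (-2 * α * T) • Matrix.of (fun _ _ : Fin n => (1 : ℝ))) *ᵥ x)
        = ∑ p : Fin n × Fin n,
            x p.1 * x p.2 * (Real.exp (-α * d p.1 p.2) - Real.exp (-2 * α * T)) := by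
      simp only [dotProduct, Matrix.mulVec, Matrix.sub_apply, Matrix.smul_apply,
        Matrix.of_apply, smul_eq_mul, mul_one, star_trivial]
      rw [Fintype.sum_prod_type]
      refine Finset.sum_congr rfl fun i _ => ?_
      rw [Finset.mul_sum]
      refine Finset.sum_congr rfl fun j _ => ?_
      ring
    rw [hquad]
    -- express each term as an integral
    have hterm : ∀ p : Fin n × Fin n,
        x p.1 * x p.2 * (Real.exp (-α * d p.1 p.2) - Real.exp (-2 * α * T))
        = ∫ t in Set.Ioc (0:ℝ) (2*T), Set.indicator (Set.Ioi (d p.1 p.2))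
            (fun t => x p.1 * x p.2 * (α * Real.exp (-α * t))) t := by
      intro p
      rw [aux_integral_rep α T (d p.1 p.2) hα (hdnn _ _) (hheight _ _)]
      rw [← MeasureTheory.integral_const_mul]
      congr 1
      ext t
      rw [← Set.indicator_const_mul]
    simp_rw [hterm]
    have hintg : ∀ p : Fin n × Fin n, IntegrableOn
        (Set.indicator (Set.Ioi (d p.1 p.2))
          (fun t => x p.1 * x p.2 * (α * Real.exp (-α * t)))) (Set.Ioc (0:ℝ) (2*T)) := by
      intro p
      refine MeasureTheory.Integrable.indicator ?_ measurableSet_Ioi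
      exact (continuous_const.mul (continuous_const.mul ((continuous_const.mul
        continuous_id).rexp))).integrableOn_Ioc
    rw [← MeasureTheory.integral_finset_sum _ (fun p _ => hintg p)]
    refine MeasureTheory.setIntegral_nonneg measurableSet_Ioc fun t ht => ?_
    have ht0 : 0 < t := ht.1
    have hrw : ∀ p : Fin n × Fin n, Set.indicator (Set.Ioi (d p.1 p.2))
        (fun t => x p.1 * x p.2 * (α * Real.exp (-α * t))) t
        = (α * Real.exp (-α * t)) * (if d p.1 p.2 < t then x p.1 * x p.2 else 0) := by
      intro p
      rw [Set.indicator_apply]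
      simp only [Set.mem_Ioi]
      split <;> ring
    simp_rw [hrw, ← Finset.mul_sum]
    refine mul_nonneg (le_of_lt (mul_pos hα (Real.exp_pos _))) ?_
    rw [Fintype.sum_prod_type]
    refine aux_sum_equiv_nonneg x (fun i j => d i j < t) ?_
    constructor
    · intro i; rw [hd0]; exact ht0
    · intro i j h; rwa [hdsymm]
    · intro i j k h1 h2
      exact lt_of_le_of_lt (hultra i k j) (max_lt h1 h2)
end

section
/- For the two-length star tree covariance V = diag((1−a²)I_{n/2}, (1−b²)I_{n/2}) + uuᵗ with u = (a,...,a,b,...,b)ᵗ, one has 𝟙ᵗV⁻¹𝟙 = n(1/(1−a²) + 1/(1−b²) + n(a−b)²/((1−a²)(1−b²))) / (1 + na²/(2(1−a²)) + nb²/(2(1−b²))) up to the stated normalization; in particular if a ≠ b then (𝟙ᵗV⁻¹𝟙)⁻¹ → 0 as n → ∞. -/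
open Matrix Filter

section Helper
open Finset

lemma sum_split (k : ℕ) (x y : ℝ) :
    ∑ i : Fin (2*k), (if (i:ℕ) < k then x else y) = k*x + k*y := by
  rw [Fin.sum_univ_eq_sum_range (fun i => if i < k then x else y) (2*k), two_mul,
    ← Finset.sum_range_add_sum_Ico _ (Nat.le_add_right k k)]
  have h1 : ∑ i ∈ Finset.range k, (if i < k then x else y) = k*x := by
    rw [Finset.sum_congr rfl (fun i hi => if_pos (Finset.mem_range.mp hi)),
      Finset.sum_const, Finset.card_range, nsmul_eq_mul]
  have h2 : ∑ i ∈ Finset.Ico k (k+k), (if i < k then x else y) = k*y := by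
    rw [Finset.sum_congr rfl (fun i hi => if_neg (by
      have := (Finset.mem_Ico.mp hi).1; omega)),
      Finset.sum_const, Nat.card_Ico, Nat.add_sub_cancel, nsmul_eq_mul]
  rw [h1, h2]

section Key
variable (a b : ℝ)

set_option maxHeartbeats 1000000 in
lemma key_eval (ha0 : 0 < a) (ha1 : a < 1) (hb0 : 0 < b) (hb1 : b < 1)
    (u : (k : ℕ) → Fin (2 * k) → ℝ)
    (hu : ∀ k (i : Fin (2 * k)), u k i = if (i : ℕ) < k then a else b)
    (V : (k : ℕ) → Matrix (Fin (2 * k)) (Fin (2 * k)) ℝ)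
    (hV : ∀ k (i j : Fin (2 * k)), V k i j =
      (if i = j then (if (i : ℕ) < k then 1 - a ^ 2 else 1 - b ^ 2) else 0) + u k i * u k j)
    (k : ℕ) :
    (1 : Fin (2 * k) → ℝ) ⬝ᵥ ((V k)⁻¹ *ᵥ (1 : Fin (2 * k) → ℝ)) =
      ((1/(1-a^2) + 1/(1-b^2))*k + ((a-b)^2/((1-a^2)*(1-b^2)))*k^2)
        / (1 + (a^2/(1-a^2) + b^2/(1-b^2))*k) := by
  have hAq : (0:ℝ) < 1 - a^2 := by nlinarith
  have hBq : (0:ℝ) < 1 - b^2 := by nlinarith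
  set K : ℝ := (k : ℝ) with hK
  have hK0 : 0 ≤ K := Nat.cast_nonneg k
  have hQden : (0:ℝ) < 1 + K*(a^2/(1-a^2) + b^2/(1-b^2)) := by positivity
  set s : ℝ := K*(a/(1-a^2) + b/(1-b^2)) / (1 + K*(a^2/(1-a^2) + b^2/(1-b^2))) with hs
  set c : ℝ := (1 - a*s)/(1-a^2) with hc
  set d : ℝ := (1 - b*s)/(1-b^2) with hd
  -- the candidate solution
  set x : Fin (2*k) → ℝ := fun i => if (i:ℕ) < k then c else d with hx
  have hsum : K*(a*c + b*d) = s := by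
    rw [hc, hd, hs]
    field_simp
    ring
  -- mulVec structure
  have hmul : ∀ (y : Fin (2*k) → ℝ) (i : Fin (2*k)), (V k *ᵥ y) i =
      (if (i:ℕ) < k then 1 - a^2 else 1 - b^2) * y i + u k i * (∑ j, u k j * y j) := by
    intro y i
    simp only [Matrix.mulVec, dotProduct, hV, add_mul, Finset.sum_add_distrib,
      Finset.mul_sum, ite_mul, zero_mul, Finset.sum_ite_eq, Finset.mem_univ, if_true, mul_assoc]
  have hVx : V k *ᵥ x = 1 := by
    funext i
    have husum : ∑ j, u k j * x j = K*(a*c + b*d) := by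
      have : ∀ j : Fin (2*k), u k j * x j = if (j:ℕ) < k then a*c else b*d := by
        intro j; rw [hu, hx]; by_cases h : (j:ℕ) < k <;> simp [h]
      rw [Finset.sum_congr rfl (fun j _ => this j), sum_split]; ring
    rw [hmul, husum, hsum, hu]
    by_cases h : (i:ℕ) < k
    · simp only [h, if_true, hx, hc, Pi.one_apply]
      field_simp
      ring
    · simp only [h, if_false, hx, hd, Pi.one_apply]
      field_simp
      ring
  -- positive definiteness
  have hposdef : (V k).PosDef := by
    rw [Matrix.posDef_iff_dotProduct_mulVec]
    constructor
    · -- Hermitian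
      rw [Matrix.IsHermitian]
      ext i j
      simp only [Matrix.conjTranspose_apply, star_trivial, hV]
      by_cases h : i = j
      · subst h; ring
      · simp only [h, Ne.symm h, if_false]; ring
    · intro y hy
      have hq : star y ⬝ᵥ (V k *ᵥ y) =
          (∑ i : Fin (2*k), (if (i:ℕ) < k then 1 - a^2 else 1 - b^2) * (y i)^2) + (∑ j : Fin (2*k), u k j * y j)^2 := by
        simp only [star_trivial, dotProduct]
        rw [Finset.sum_congr rfl (fun i _ => by rw [hmul y i])]
        simp only [mul_add, Finset.sum_add_distrib]
        congr 1
        · exact Finset.sum_congr rfl (fun i _ => by ring)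
        · rw [sq, Finset.sum_mul]
          exact Finset.sum_congr rfl (fun i _ => by ring)
      rw [hq]
      have h1 : 0 < ∑ i : Fin (2*k), (if (i:ℕ) < k then 1 - a^2 else 1 - b^2) * (y i)^2 := by
        obtain ⟨i, hi⟩ := Function.ne_iff.mp hy
        apply Finset.sum_pos' (fun j _ => by positivity)
        refine ⟨i, Finset.mem_univ i, ?_⟩
        have hyi : (0:ℝ) < (y i)^2 := lt_of_le_of_ne (sq_nonneg _) (Ne.symm (pow_ne_zero 2 hi))
        by_cases h : (i:ℕ) < k <;> simp [h] <;> nlinarith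
      positivity
  have hdet : IsUnit (V k).det := isUnit_iff_ne_zero.mpr (ne_of_gt hposdef.det_pos)
  have hinv : (V k)⁻¹ *ᵥ (1 : Fin (2*k) → ℝ) = x := by
    rw [← hVx, Matrix.mulVec_mulVec, Matrix.nonsing_inv_mul (V k) hdet, Matrix.one_mulVec]
  rw [hinv]
  have hdot : (1 : Fin (2*k) → ℝ) ⬝ᵥ x = K*c + K*d := by
    simp only [dotProduct, Pi.one_apply, one_mul, hx, sum_split]
    rfl
  rw [hdot, hc, hd, hs]
  field_simp
  ring
end Key

end Helper

/-- for the two-branch-length star tree with `2k` tips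
(`a = e^{-αt₁}`, `b = e^{-αt₂}`, `a ≠ b`), the GLS variance
`(𝟙ᵗ V⁻¹ 𝟙)⁻¹` tends to `0` as the number of tips grows. -/
theorem two_length_star_variance_tendsto_zero (a b : ℝ)
    (ha0 : 0 < a) (ha1 : a < 1) (hb0 : 0 < b) (hb1 : b < 1) (hab : a ≠ b)
    (u : (k : ℕ) → Fin (2 * k) → ℝ)
    (hu : ∀ k (i : Fin (2 * k)), u k i = if (i : ℕ) < k then a else b)
    (V : (k : ℕ) → Matrix (Fin (2 * k)) (Fin (2 * k)) ℝ)
    (hV : ∀ k (i j : Fin (2 * k)), V k i j =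
      (if i = j then (if (i : ℕ) < k then 1 - a ^ 2 else 1 - b ^ 2) else 0) + u k i * u k j) :
    Tendsto (fun k => ((1 : Fin (2 * k) → ℝ) ⬝ᵥ ((V k)⁻¹ *ᵥ (1 : Fin (2 * k) → ℝ)))⁻¹)
      atTop (nhds 0) := by
  have hAq : (0:ℝ) < 1 - a^2 := by nlinarith
  have hBq : (0:ℝ) < 1 - b^2 := by nlinarith
  have hkey := key_eval a b ha0 ha1 hb0 hb1 u hu V hV
  simp only [hkey]
  set P : ℝ := 1/(1-a^2) + 1/(1-b^2) with hP
  set Q : ℝ := a^2/(1-a^2) + b^2/(1-b^2) with hQ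
  set R : ℝ := (a-b)^2/((1-a^2)*(1-b^2)) with hR
  have hPpos : 0 < P := by rw [hP]; positivity
  have hQpos : 0 < Q := by rw [hQ]; positivity
  have hRpos : 0 < R := by
    have hsub : a - b ≠ 0 := sub_ne_zero.mpr hab
    have h2 : (0:ℝ) < (a-b)^2 := lt_of_le_of_ne (sq_nonneg _) (Ne.symm (pow_ne_zero 2 hsub))
    exact div_pos h2 (mul_pos hAq hBq)
  have h0 : Tendsto (fun k : ℕ => ((k:ℝ))⁻¹) atTop (nhds 0) :=
    tendsto_inv_atTop_zero.comp tendsto_natCast_atTop_atTop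
  have hlim : Tendsto
      (fun k : ℕ => (((k:ℝ))⁻¹*((k:ℝ))⁻¹ + Q*((k:ℝ))⁻¹)/(P*((k:ℝ))⁻¹ + R)) atTop (nhds 0) := by
    have := ((h0.mul h0).add ((tendsto_const_nhds : Tendsto (fun _ : ℕ => Q) atTop (nhds Q)).mul h0)).div
      (((tendsto_const_nhds : Tendsto (fun _ : ℕ => P) atTop _).mul h0).add
        (tendsto_const_nhds : Tendsto (fun _ : ℕ => R) atTop (nhds R)))
      (by simpa using hRpos.ne')
    simpa [Pi.div_def] using this
  refine Tendsto.congr' ?_ hlim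
  filter_upwards [eventually_ge_atTop 1] with k hk
  have hKpos : (0:ℝ) < (k:ℝ) := by exact_mod_cast Nat.lt_of_lt_of_le Nat.zero_lt_one hk
  have h1 : (0:ℝ) < 1 + Q*(k:ℝ) := by nlinarith [mul_pos hQpos hKpos]
  have hk2 : (0:ℝ) < (k:ℝ)^2 := by positivity
  have h2 : (0:ℝ) < P*(k:ℝ) + R*(k:ℝ)^2 := by nlinarith [mul_pos hPpos hKpos, mul_pos hRpos hk2]
  have h3 : (0:ℝ) < P*((k:ℝ))⁻¹ + R := by
    have : (0:ℝ) < P*((k:ℝ))⁻¹ := mul_pos hPpos (inv_pos.mpr hKpos)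
    linarith
  rw [inv_div, div_eq_div_iff h3.ne' h2.ne']
  field_simp
end

section
/- Given an ultrametric tree and an interval (a,b), one can select a set 𝒞 of pairwise non-intersecting (independent) contrasts with respect to internal nodes of ages in (a,b) such that |𝒞| ≥ |ℐ_{(a,b)}|/2, where ℐ_{(a,b)} is the set of internal nodes with age in (a,b). -/
/-- Rooted binary trees; an internal node carries its age
(the distance to any descendant tip in an ultrametric tree). -/
inductive BTree
  | leaf : BTree
  | node (age : ℝ) (l r : BTree) : BTree

namespace BTree

/-- Age of the root of a tree (tips have age `0`). -/
def rootAge : BTree → ℝ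
  | leaf => 0
  | node a _ _ => a

/-- Ultrametric consistency: ages strictly decrease from a node to its children. -/
def validAges : BTree → Prop
  | leaf => True
  | node a l r => rootAge l < a ∧ rootAge r < a ∧ validAges l ∧ validAges r

/-- The subtree at an address (a list of left/right choices), if any. -/
def subtreeAt : BTree → List Bool → Option BTree
  | t, [] => some t
  | leaf, _ :: _ => none
  | node _ l r, b :: p => (if b then r else l).subtreeAt p

/-- Age of the node at a given address (`0` if the address is invalid or a tip). -/
noncomputable def ageAt (t : BTree) (p : List Bool) : ℝ :=
  match t.subtreeAt p with
  | some s => s.rootAge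
  | none => 0

/-- Addresses of the tips of a tree. -/
def tips : BTree → Finset (List Bool)
  | leaf => {[]}
  | node _ l r => l.tips.image (List.cons false) ∪ r.tips.image (List.cons true)

/-- Addresses of the internal nodes of a tree. -/
def internals : BTree → Finset (List Bool)
  | leaf => ∅
  | node _ l r => insert [] (l.internals.image (List.cons false) ∪ r.internals.image (List.cons true))

end BTree

/-- Longest common prefix of two addresses: the address of the most recent
common ancestor of two tips. -/
def lcp : List Bool → List Bool → List Bool
  | a :: p, b :: q => if a = b then a :: lcp p q else []
  | _, _ => []

/-- The set of edges (each edge encoded by the address of the node below it) on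
the path joining two tips: all strict prefixes of either tip address that are
strictly longer than the common prefix. -/
def pathEdges (p q : List Bool) : Finset (List Bool) :=
  ((Finset.range p.length).image (fun k => p.take (k + 1)) ∪
      (Finset.range q.length).image (fun k => q.take (k + 1))).filter
    (fun e => (lcp p q).length < e.length)

/-- `(p, q)` is a contrast of tree `t` with respect to the internal node `i`:
two tips whose most recent common ancestor is `i`. -/
def IsContrast (t : BTree) (i : List Bool) (pq : List Bool × List Bool) : Prop :=
  pq.1 ∈ t.tips ∧ pq.2 ∈ t.tips ∧ lcp pq.1 pq.2 = i

namespace HalfContrasts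

open BTree

/-- The set of nonempty prefixes ("edges above") of an address. -/
def freeSet (p : List Bool) : Finset (List Bool) :=
  (Finset.range p.length).image (fun k => p.take (k + 1))

lemma pathEdges_eq (p q : List Bool) :
    pathEdges p q = (freeSet p ∪ freeSet q).filter (fun e => (lcp p q).length < e.length) := rfl

lemma length_pos_of_mem_freeSet {e p : List Bool} (h : e ∈ freeSet p) : 0 < e.length := by
  simp only [freeSet, Finset.mem_image, Finset.mem_range] at h
  obtain ⟨k, hk, rfl⟩ := h
  simp only [List.length_take]
  omega

lemma ne_nil_of_mem_pathEdges {e p q : List Bool} (h : e ∈ pathEdges p q) : e ≠ [] := by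
  rw [pathEdges_eq, Finset.mem_filter, Finset.mem_union] at h
  rintro rfl
  rcases h.1 with h' | h' <;> simpa using length_pos_of_mem_freeSet h'

lemma nil_notMem_pathEdges {p q : List Bool} : [] ∉ pathEdges p q :=
  fun h => ne_nil_of_mem_pathEdges h rfl

lemma freeSet_cons (b : Bool) (p : List Bool) :
    freeSet (b :: p) = insert [b] ((freeSet p).image (List.cons b)) := by
  ext e
  simp only [freeSet, Finset.mem_image, Finset.mem_range, Finset.mem_insert, List.length_cons]
  constructor
  · rintro ⟨k, hk, rfl⟩
    cases k with
    | zero => left; simp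
    | succ j =>
        right
        exact ⟨p.take (j + 1), ⟨j, by omega, rfl⟩, by simp [List.take_succ_cons]⟩
  · rintro (rfl | ⟨e', ⟨j, hj, rfl⟩, rfl⟩)
    · exact ⟨0, by omega, by simp⟩
    · exact ⟨j + 1, by omega, by simp [List.take_succ_cons]⟩

lemma lcp_cons (b : Bool) (p q : List Bool) : lcp (b :: p) (b :: q) = b :: lcp p q := by
  simp [lcp]

lemma lcp_cons_ne {b b' : Bool} (h : b ≠ b') (p q : List Bool) : lcp (b :: p) (b' :: q) = [] := by
  simp [lcp, h]

lemma pathEdges_cons (b : Bool) (p q : List Bool) :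
    pathEdges (b :: p) (b :: q) = (pathEdges p q).image (List.cons b) := by
  ext e
  rw [pathEdges_eq, pathEdges_eq]
  simp only [freeSet_cons, lcp_cons, Finset.mem_filter, Finset.mem_union, Finset.mem_insert,
    Finset.mem_image, List.length_cons]
  constructor
  · rintro ⟨(rfl | ⟨e', he', rfl⟩) | (rfl | ⟨e', he', rfl⟩), hlen⟩
    · simp at hlen
    · exact ⟨e', ⟨Or.inl he', by simpa using hlen⟩, rfl⟩
    · simp at hlen
    · exact ⟨e', ⟨Or.inr he', by simpa using hlen⟩, rfl⟩
  · rintro ⟨e', ⟨he', hlen⟩, rfl⟩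
    refine ⟨?_, by simpa using hlen⟩
    rcases he' with h | h
    · exact Or.inl (Or.inr ⟨e', h, rfl⟩)
    · exact Or.inr (Or.inr ⟨e', h, rfl⟩)

lemma pathEdges_cons_ne {b b' : Bool} (h : b ≠ b') (p q : List Bool) :
    pathEdges (b :: p) (b' :: q) = freeSet (b :: p) ∪ freeSet (b' :: q) := by
  rw [pathEdges_eq, lcp_cons_ne h]
  refine Finset.filter_true_of_mem fun e he => ?_
  rcases Finset.mem_union.mp he with h' | h' <;>
    simpa using length_pos_of_mem_freeSet h'

lemma head_of_mem_pathEdges_cons {b : Bool} {p q e : List Bool}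
    (h : e ∈ pathEdges (b :: p) (b :: q)) : ∃ e', e = b :: e' := by
  rw [pathEdges_cons] at h
  obtain ⟨e', _, rfl⟩ := Finset.mem_image.mp h
  exact ⟨e', rfl⟩

lemma head_of_mem_freeSet_cons {b : Bool} {p e : List Bool}
    (h : e ∈ freeSet (b :: p)) : ∃ e', e = b :: e' := by
  rw [freeSet_cons] at h
  rcases Finset.mem_insert.mp h with rfl | h
  · exact ⟨[], rfl⟩
  · obtain ⟨e', _, rfl⟩ := Finset.mem_image.mp h
    exact ⟨e', rfl⟩

lemma ageAt_nil (t : BTree) : t.ageAt [] = t.rootAge := by cases t <;> rfl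

lemma ageAt_cons_false (c : ℝ) (l r : BTree) (p : List Bool) :
    (BTree.node c l r).ageAt (false :: p) = l.ageAt p := rfl

lemma ageAt_cons_true (c : ℝ) (l r : BTree) (p : List Bool) :
    (BTree.node c l r).ageAt (true :: p) = r.ageAt p := rfl

lemma tips_nonempty (t : BTree) : t.tips.Nonempty := by
  induction t with
  | leaf => exact ⟨[], by simp [BTree.tips]⟩
  | node c l r ihl ihr =>
      obtain ⟨p, hp⟩ := ihl
      exact ⟨false :: p, Finset.mem_union_left _ (Finset.mem_image_of_mem _ hp)⟩



lemma disjoint_cross (p q p' q' : List Bool) :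
    Disjoint (pathEdges (false :: p) (false :: q)) (pathEdges (true :: p') (true :: q')) := by
  rw [Finset.disjoint_left]
  intro e he he'
  obtain ⟨e1, rfl⟩ := head_of_mem_pathEdges_cons he
  obtain ⟨e2, h2⟩ := head_of_mem_pathEdges_cons he'
  simp at h2

lemma free_cross {b b' : Bool} (h : b ≠ b') (τ p q : List Bool) :
    Disjoint (freeSet (b :: τ)) (pathEdges (b' :: p) (b' :: q)) := by
  rw [Finset.disjoint_left]
  intro e he he'
  obtain ⟨e1, rfl⟩ := head_of_mem_freeSet_cons he
  obtain ⟨e2, h2⟩ := head_of_mem_pathEdges_cons he'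
  simp only [List.cons.injEq] at h2
  exact h h2.1

lemma free_same {τ p q : List Bool} (b : Bool) (h : Disjoint (freeSet τ) (pathEdges p q)) :
    Disjoint (freeSet (b :: τ)) (pathEdges (b :: p) (b :: q)) := by
  rw [freeSet_cons, pathEdges_cons, Finset.disjoint_insert_left]
  constructor
  · intro hmem
    obtain ⟨e, he, heq⟩ := Finset.mem_image.mp hmem
    have : e = [] := by simpa using heq.symm
    exact nil_notMem_pathEdges (this ▸ he)
  · exact (Finset.disjoint_image List.cons_injective).mpr h

lemma rc_disjoint_left {τ σ p q : List Bool} (hfree : Disjoint (freeSet τ) (pathEdges p q)) :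
    Disjoint (pathEdges (false :: τ) (true :: σ)) (pathEdges (false :: p) (false :: q)) := by
  rw [pathEdges_cons_ne (by simp), Finset.disjoint_union_left]
  exact ⟨free_same false hfree, free_cross (by simp) σ p q⟩

lemma rc_disjoint_right {τ σ p q : List Bool} (hfree : Disjoint (freeSet σ) (pathEdges p q)) :
    Disjoint (pathEdges (false :: τ) (true :: σ)) (pathEdges (true :: p) (true :: q)) := by
  rw [pathEdges_cons_ne (by simp), Finset.disjoint_union_left]
  exact ⟨free_cross (by simp) τ p q, free_same true hfree⟩

lemma map_witness_false (a b c : ℝ) (l r : BTree) (C : Finset (List Bool × List Bool))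
    (h : ∀ pq ∈ C, ∃ i ∈ l.internals, a < l.ageAt i ∧ l.ageAt i < b ∧ IsContrast l i pq) :
    ∀ pq ∈ C.image (fun pq => (false :: pq.1, false :: pq.2)),
      ∃ i ∈ (BTree.node c l r).internals,
        a < (BTree.node c l r).ageAt i ∧ (BTree.node c l r).ageAt i < b ∧
        IsContrast (BTree.node c l r) i pq := by
  rintro pq hpq
  obtain ⟨⟨p, q⟩, hmem, rfl⟩ := Finset.mem_image.mp hpq
  obtain ⟨i, hi, h1, h2, ht1, ht2, hlcp⟩ := h _ hmem
  refine ⟨false :: i, ?_, ?_, ?_, ?_, ?_, ?_⟩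
  · exact Finset.mem_insert_of_mem (Finset.mem_union_left _ (Finset.mem_image_of_mem _ hi))
  · rwa [ageAt_cons_false]
  · rwa [ageAt_cons_false]
  · exact Finset.mem_union_left _ (Finset.mem_image_of_mem _ ht1)
  · exact Finset.mem_union_left _ (Finset.mem_image_of_mem _ ht2)
  · show lcp (false :: p) (false :: q) = false :: i
    rw [lcp_cons, hlcp]

lemma map_witness_true (a b c : ℝ) (l r : BTree) (C : Finset (List Bool × List Bool))
    (h : ∀ pq ∈ C, ∃ i ∈ r.internals, a < r.ageAt i ∧ r.ageAt i < b ∧ IsContrast r i pq) :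
    ∀ pq ∈ C.image (fun pq => (true :: pq.1, true :: pq.2)),
      ∃ i ∈ (BTree.node c l r).internals,
        a < (BTree.node c l r).ageAt i ∧ (BTree.node c l r).ageAt i < b ∧
        IsContrast (BTree.node c l r) i pq := by
  rintro pq hpq
  obtain ⟨⟨p, q⟩, hmem, rfl⟩ := Finset.mem_image.mp hpq
  obtain ⟨i, hi, h1, h2, ht1, ht2, hlcp⟩ := h _ hmem
  refine ⟨true :: i, ?_, ?_, ?_, ?_, ?_, ?_⟩
  · exact Finset.mem_insert_of_mem (Finset.mem_union_right _ (Finset.mem_image_of_mem _ hi))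
  · rwa [ageAt_cons_true]
  · rwa [ageAt_cons_true]
  · exact Finset.mem_union_right _ (Finset.mem_image_of_mem _ ht1)
  · exact Finset.mem_union_right _ (Finset.mem_image_of_mem _ ht2)
  · show lcp (true :: p) (true :: q) = true :: i
    rw [lcp_cons, hlcp]

lemma Itf_card (a b c : ℝ) (l r : BTree) :
    ((BTree.node c l r).internals.filter
        (fun i => a < (BTree.node c l r).ageAt i ∧ (BTree.node c l r).ageAt i < b)).card
      = (if a < c ∧ c < b then 1 else 0)
        + (l.internals.filter (fun i => a < l.ageAt i ∧ l.ageAt i < b)).card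
        + (r.internals.filter (fun i => a < r.ageAt i ∧ r.ageAt i < b)).card := by
  have hl : (l.internals.image (List.cons false)).filter
      (fun i => a < (BTree.node c l r).ageAt i ∧ (BTree.node c l r).ageAt i < b)
      = (l.internals.filter (fun i => a < l.ageAt i ∧ l.ageAt i < b)).image (List.cons false) := by
    rw [Finset.filter_image]
    congr 1
  have hr : (r.internals.image (List.cons true)).filter
      (fun i => a < (BTree.node c l r).ageAt i ∧ (BTree.node c l r).ageAt i < b)
      = (r.internals.filter (fun i => a < r.ageAt i ∧ r.ageAt i < b)).image (List.cons true) := by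
    rw [Finset.filter_image]
    congr 1
  have hdisj : Disjoint
      ((l.internals.filter (fun i => a < l.ageAt i ∧ l.ageAt i < b)).image (List.cons false))
      ((r.internals.filter (fun i => a < r.ageAt i ∧ r.ageAt i < b)).image (List.cons true)) := by
    rw [Finset.disjoint_left]
    rintro e he he'
    obtain ⟨x, _, rfl⟩ := Finset.mem_image.mp he
    obtain ⟨y, _, h⟩ := Finset.mem_image.mp he'
    simp at h
  have hcards : ((l.internals.image (List.cons false) ∪ r.internals.image (List.cons true)).filter
      (fun i => a < (BTree.node c l r).ageAt i ∧ (BTree.node c l r).ageAt i < b)).card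
      = (l.internals.filter (fun i => a < l.ageAt i ∧ l.ageAt i < b)).card
        + (r.internals.filter (fun i => a < r.ageAt i ∧ r.ageAt i < b)).card := by
    rw [Finset.filter_union, hl, hr, Finset.card_union_of_disjoint hdisj,
      Finset.card_image_of_injective _ List.cons_injective,
      Finset.card_image_of_injective _ List.cons_injective]
  have hnilage : (BTree.node c l r).ageAt [] = c := rfl
  have hnotmem : ([] : List Bool) ∉
      ((l.internals.image (List.cons false) ∪ r.internals.image (List.cons true)).filter
        (fun i => a < (BTree.node c l r).ageAt i ∧ (BTree.node c l r).ageAt i < b)) := by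
    intro hmem
    rcases Finset.mem_union.mp (Finset.mem_filter.mp hmem).1 with h | h <;>
      · obtain ⟨x, _, hx⟩ := Finset.mem_image.mp h
        simp at hx
  show ((insert [] (l.internals.image (List.cons false) ∪ r.internals.image (List.cons true))).filter
      (fun i => a < (BTree.node c l r).ageAt i ∧ (BTree.node c l r).ageAt i < b)).card = _
  rw [Finset.filter_insert]
  by_cases hρ : a < c ∧ c < b
  · rw [if_pos (by rwa [hnilage]), if_pos hρ, Finset.card_insert_of_notMem hnotmem, hcards]
    omega
  · rw [if_neg (by rwa [hnilage]), if_neg hρ, hcards]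
    omega



lemma key (a b : ℝ) : ∀ t : BTree, t.validAges →
    ∃ C : Finset (List Bool × List Bool),
      (∀ pq ∈ C, ∃ i ∈ t.internals, a < t.ageAt i ∧ t.ageAt i < b ∧ IsContrast t i pq) ∧
      (∀ pq ∈ C, ∀ pq' ∈ C, pq ≠ pq' →
        Disjoint (pathEdges pq.1 pq.2) (pathEdges pq'.1 pq'.2)) ∧
      ((t.internals.filter (fun i => a < t.ageAt i ∧ t.ageAt i < b)).card + 1 ≤ 2 * C.card ∨
        ((t.internals.filter (fun i => a < t.ageAt i ∧ t.ageAt i < b)).card ≤ 2 * C.card ∧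
          ∃ τ ∈ t.tips, ∀ pq ∈ C, Disjoint (freeSet τ) (pathEdges pq.1 pq.2))) := by
  intro t
  induction t with
  | leaf =>
      intro _
      refine ⟨∅, by simp, by simp, Or.inr ⟨by simp [BTree.internals], [], ?_, by simp⟩⟩
      simp [BTree.tips]
  | node c l r ihl ihr =>
      intro hval
      obtain ⟨_, _, hvl, hvr⟩ := hval
      obtain ⟨Cl, wl, dl, nl⟩ := ihl hvl
      obtain ⟨Cr, wr, dr, nr⟩ := ihr hvr
      set Fl : List Bool × List Bool → List Bool × List Bool :=
        fun pq => (false :: pq.1, false :: pq.2) with hFl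
      set Fr : List Bool × List Bool → List Bool × List Bool :=
        fun pq => (true :: pq.1, true :: pq.2) with hFr
      have injFl : Function.Injective Fl := by
        rintro ⟨x1, x2⟩ ⟨y1, y2⟩ h
        simp [hFl, Prod.ext_iff] at h
        simp [Prod.ext_iff, h.1, h.2]
      have injFr : Function.Injective Fr := by
        rintro ⟨x1, x2⟩ ⟨y1, y2⟩ h
        simp [hFr, Prod.ext_iff] at h
        simp [Prod.ext_iff, h.1, h.2]
      have hdisjU : Disjoint (Cl.image Fl) (Cr.image Fr) := by
        rw [Finset.disjoint_left]
        rintro pq h1 h2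
        obtain ⟨x, _, rfl⟩ := Finset.mem_image.mp h1
        obtain ⟨y, _, h⟩ := Finset.mem_image.mp h2
        simp [hFl, hFr, Prod.ext_iff] at h
      have cardU : (Cl.image Fl ∪ Cr.image Fr).card = Cl.card + Cr.card := by
        rw [Finset.card_union_of_disjoint hdisjU,
          Finset.card_image_of_injective _ injFl, Finset.card_image_of_injective _ injFr]
      have wU : ∀ pq ∈ Cl.image Fl ∪ Cr.image Fr,
          ∃ i ∈ (BTree.node c l r).internals,
            a < (BTree.node c l r).ageAt i ∧ (BTree.node c l r).ageAt i < b ∧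
            IsContrast (BTree.node c l r) i pq := by
        intro pq hpq
        rcases Finset.mem_union.mp hpq with h | h
        · exact map_witness_false a b c l r Cl wl pq h
        · exact map_witness_true a b c l r Cr wr pq h
      have dU : ∀ pq ∈ Cl.image Fl ∪ Cr.image Fr, ∀ pq' ∈ Cl.image Fl ∪ Cr.image Fr,
          pq ≠ pq' → Disjoint (pathEdges pq.1 pq.2) (pathEdges pq'.1 pq'.2) := by
        intro pq hpq pq' hpq' hne
        rcases Finset.mem_union.mp hpq with h1 | h1 <;>
          rcases Finset.mem_union.mp hpq' with h2 | h2
        · obtain ⟨x, hx, rfl⟩ := Finset.mem_image.mp h1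
          obtain ⟨y, hy, rfl⟩ := Finset.mem_image.mp h2
          have hxy : x ≠ y := fun h => hne (by rw [h])
          show Disjoint (pathEdges (false :: x.1) (false :: x.2))
            (pathEdges (false :: y.1) (false :: y.2))
          rw [pathEdges_cons, pathEdges_cons]
          exact (Finset.disjoint_image List.cons_injective).mpr (dl x hx y hy hxy)
        · obtain ⟨x, hx, rfl⟩ := Finset.mem_image.mp h1
          obtain ⟨y, hy, rfl⟩ := Finset.mem_image.mp h2
          exact disjoint_cross x.1 x.2 y.1 y.2
        · obtain ⟨x, hx, rfl⟩ := Finset.mem_image.mp h1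
          obtain ⟨y, hy, rfl⟩ := Finset.mem_image.mp h2
          exact (disjoint_cross y.1 y.2 x.1 x.2).symm
        · obtain ⟨x, hx, rfl⟩ := Finset.mem_image.mp h1
          obtain ⟨y, hy, rfl⟩ := Finset.mem_image.mp h2
          have hxy : x ≠ y := fun h => hne (by rw [h])
          show Disjoint (pathEdges (true :: x.1) (true :: x.2))
            (pathEdges (true :: y.1) (true :: y.2))
          rw [pathEdges_cons, pathEdges_cons]
          exact (Finset.disjoint_image List.cons_injective).mpr (dr x hx y hy hxy)
      have cardI := Itf_card a b c l r
      have hk1 : (if a < c ∧ c < b then 1 else 0) ≤ 1 := by split <;> omega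
      rcases nl with sl | ⟨tl, τl, hτl, freel⟩ <;> rcases nr with sr | ⟨tr, τr, hτr, freer⟩
      · -- both slack
        exact ⟨Cl.image Fl ∪ Cr.image Fr, wU, dU, Or.inl (by omega)⟩
      · -- slack left, free right
        refine ⟨Cl.image Fl ∪ Cr.image Fr, wU, dU, Or.inr ⟨by omega, true :: τr, ?_, ?_⟩⟩
        · exact Finset.mem_union_right _ (Finset.mem_image_of_mem _ hτr)
        · intro pq hpq
          rcases Finset.mem_union.mp hpq with h | h
          · obtain ⟨x, hx, rfl⟩ := Finset.mem_image.mp h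
            exact free_cross (by simp) τr x.1 x.2
          · obtain ⟨x, hx, rfl⟩ := Finset.mem_image.mp h
            exact free_same true (freer x hx)
      · -- free left, slack right
        refine ⟨Cl.image Fl ∪ Cr.image Fr, wU, dU, Or.inr ⟨by omega, false :: τl, ?_, ?_⟩⟩
        · exact Finset.mem_union_left _ (Finset.mem_image_of_mem _ hτl)
        · intro pq hpq
          rcases Finset.mem_union.mp hpq with h | h
          · obtain ⟨x, hx, rfl⟩ := Finset.mem_image.mp h
            exact free_same false (freel x hx)
          · obtain ⟨x, hx, rfl⟩ := Finset.mem_image.mp h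
            exact free_cross (by simp) τl x.1 x.2
      · -- both free
        by_cases hρ : a < c ∧ c < b
        · -- add the root contrast
          set rc : List Bool × List Bool := (false :: τl, true :: τr) with hrc
          have hrcnot : rc ∉ Cl.image Fl ∪ Cr.image Fr := by
            intro h
            rcases Finset.mem_union.mp h with h | h <;>
              · obtain ⟨x, _, hx⟩ := Finset.mem_image.mp h
                simp [hFl, hFr, hrc, Prod.ext_iff] at hx
          have cardC : (insert rc (Cl.image Fl ∪ Cr.image Fr)).card = Cl.card + Cr.card + 1 := by
            rw [Finset.card_insert_of_notMem hrcnot, cardU]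
          have wrc : ∃ i ∈ (BTree.node c l r).internals,
              a < (BTree.node c l r).ageAt i ∧ (BTree.node c l r).ageAt i < b ∧
              IsContrast (BTree.node c l r) i rc := by
            refine ⟨[], Finset.mem_insert_self _ _, hρ.1, hρ.2, ?_, ?_, ?_⟩
            · exact Finset.mem_union_left _ (Finset.mem_image_of_mem _ hτl)
            · exact Finset.mem_union_right _ (Finset.mem_image_of_mem _ hτr)
            · exact lcp_cons_ne (by simp) τl τr
          have drc : ∀ pq ∈ Cl.image Fl ∪ Cr.image Fr,
              Disjoint (pathEdges rc.1 rc.2) (pathEdges pq.1 pq.2) := by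
            intro pq hpq
            rcases Finset.mem_union.mp hpq with h | h
            · obtain ⟨x, hx, rfl⟩ := Finset.mem_image.mp h
              exact rc_disjoint_left (freel x hx)
            · obtain ⟨x, hx, rfl⟩ := Finset.mem_image.mp h
              exact rc_disjoint_right (freer x hx)
          refine ⟨insert rc (Cl.image Fl ∪ Cr.image Fr), ?_, ?_, Or.inl ?_⟩
          · intro pq hpq
            rcases Finset.mem_insert.mp hpq with rfl | h
            · exact wrc
            · exact wU pq h
          · intro pq hpq pq' hpq' hne
            rcases Finset.mem_insert.mp hpq with rfl | h1 <;>
              rcases Finset.mem_insert.mp hpq' with rfl | h2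
            · exact absurd rfl hne
            · exact drc pq' h2
            · exact (drc pq h1).symm
            · exact dU pq h1 pq' h2 hne
          · rw [cardI, cardC, if_pos hρ]
            omega
        · refine ⟨Cl.image Fl ∪ Cr.image Fr, wU, dU, Or.inr ⟨?_, false :: τl, ?_, ?_⟩⟩
          · rw [cardI, cardU, if_neg hρ]
            omega
          · exact Finset.mem_union_left _ (Finset.mem_image_of_mem _ hτl)
          · intro pq hpq
            rcases Finset.mem_union.mp hpq with h | h
            · obtain ⟨x, hx, rfl⟩ := Finset.mem_image.mp h
              exact free_same false (freel x hx)
            · obtain ⟨x, hx, rfl⟩ := Finset.mem_image.mp h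
              exact free_cross (by simp) τl x.1 x.2

end HalfContrasts

/-- in an ultrametric binary tree, for any interval `(a, b)` one can select
pairwise path-disjoint ("independent") contrasts with respect to internal nodes of age in
`(a, b)`, covering at least half of the internal nodes with age in `(a, b)`. -/
theorem half_independent_contrasts (t : BTree) (hval : t.validAges) (a b : ℝ) :
    ∃ C : Finset (List Bool × List Bool),
      (∀ pq ∈ C, ∃ i ∈ t.internals,
        a < t.ageAt i ∧ t.ageAt i < b ∧ IsContrast t i pq) ∧
      (∀ pq ∈ C, ∀ pq' ∈ C, pq ≠ pq' →
        Disjoint (pathEdges pq.1 pq.2) (pathEdges pq'.1 pq'.2)) ∧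
      (t.internals.filter (fun i => a < t.ageAt i ∧ t.ageAt i < b)).card ≤ 2 * C.card := by
  obtain ⟨C, h1, h2, h3⟩ := HalfContrasts.key a b t hval
  refine ⟨C, h1, h2, ?_⟩
  rcases h3 with h | ⟨h, _⟩ <;> omega
end

section
/- For the OU model on a symmetric tree with m levels, branching degrees d₁,...,d_m and node ages u₁ > ... > u_m, the covariance matrix γV_α has eigenvalues γλ_k(α) with multiplicity d₁⋯d_{k-1}(d_k − 1), where λ_k(α) = ∑_{i=k}^{m} d_{i+1}⋯d_m (e^{−2αu_{i+1}} − e^{−2αu_i}) with u_{m+1} = 0, and the top eigenvalue λ₀ (multiplicity 1, eigenvector 𝟙) incorporates e^{−2αu₁}. -/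
open Matrix

/-- `λ_k(α) = ∑_{i=k}^m d_{i+1}⋯d_m (e^{-2αu_{i+1}} - e^{-2αu_i})`, with `u_{m+1} = 0`. -/
noncomputable def ouLam (m : ℕ) (d : ℕ → ℕ) (u : ℕ → ℝ) (k : ℕ) (α : ℝ) : ℝ :=
  ∑ i ∈ Finset.Icc k m, (∏ j ∈ Finset.Icc (i + 1) m, (d j : ℝ)) *
    (Real.exp (-2 * α * u (i + 1)) - Real.exp (-2 * α * u i))

/-- The eigenvalues of `V_α`: for `k ≥ 1` it is `λ_k(α)`, while the top eigenvalue `λ₀`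
additionally incorporates the term `d₁⋯d_m e^{-2αu₁}` coming from the root branch. -/
noncomputable def ouLamFull (m : ℕ) (d : ℕ → ℕ) (u : ℕ → ℝ) (k : ℕ) (α : ℝ) : ℝ :=
  if k = 0 then
    ouLam m d u 1 α + (∏ j ∈ Finset.Icc 1 m, (d j : ℝ)) * Real.exp (-2 * α * u 1)
  else ouLam m d u k α

namespace OUAux

noncomputable def wv {D : ℕ} (y x : Fin D) : ℝ :=
  if (y : ℕ) = 0 then 1 else (if x = y then 1 else 0) - (if (x : ℕ) = 0 then 1 else 0)

noncomputable def qv {D : ℕ} (y x : Fin D) : ℝ :=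
  if (y : ℕ) = 0 then (D : ℝ)⁻¹ else (if x = y then 1 else 0) - (D : ℝ)⁻¹

lemma wv_zero {D : ℕ} (y x : Fin D) (h : (y : ℕ) = 0) : wv y x = 1 := by
  simp [wv, h]

lemma sum_ite_val_zero {D : ℕ} (hD : 0 < D) (f : Fin D → ℝ) :
    ∑ t : Fin D, (if (t : ℕ) = 0 then f t else 0) = f ⟨0, hD⟩ := by
  rw [show (fun t : Fin D => if (t : ℕ) = 0 then f t else 0)
      = fun t : Fin D => if t = ⟨0, hD⟩ then f t else 0 by
    funext t; congr 1; simp [Fin.ext_iff]]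
  simp

lemma sum_wv {D : ℕ} (y : Fin D) : ∑ t : Fin D, wv y t = if (y : ℕ) = 0 then (D : ℝ) else 0 := by
  have hD : 0 < D := y.pos
  by_cases h : (y : ℕ) = 0
  · simp [wv, h]
  · rw [if_neg h]
    simp only [wv, if_neg h]
    rw [Finset.sum_sub_distrib]
    have h1 : ∑ t : Fin D, (if t = y then (1:ℝ) else 0) = 1 := by simp
    have h2 : ∑ t : Fin D, (if (t : ℕ) = 0 then (1:ℝ) else 0) = 1 := by
      rw [sum_ite_val_zero hD]
    rw [h1, h2]; ring

lemma sum_qw {D : ℕ} (y y' : Fin D) :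
    ∑ t : Fin D, qv y t * wv y' t = if y = y' then 1 else 0 := by
  have hD : 0 < D := y.pos
  have hDr : (D : ℝ) ≠ 0 := Nat.cast_ne_zero.mpr hD.ne'
  by_cases h' : (y' : ℕ) = 0
  · simp only [wv, if_pos h', mul_one]
    by_cases h : (y : ℕ) = 0
    · have : y = y' := Fin.ext (h.trans h'.symm)
      simp [qv, h, this, h', Finset.sum_const, mul_inv_cancel₀ hDr]
    · have hne : y ≠ y' := fun e => h (e ▸ h')
      simp only [qv, if_neg h, if_neg hne]
      rw [Finset.sum_sub_distrib]
      have h1 : ∑ t : Fin D, (if t = y then (1:ℝ) else 0) = 1 := by simp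
      rw [h1]
      simp [Finset.sum_const, Finset.card_univ, hne, mul_inv_cancel₀ hDr]
  · simp only [wv, if_neg h']
    have key : ∀ f : Fin D → ℝ,
        ∑ t : Fin D, f t * ((if t = y' then (1:ℝ) else 0) - (if (t : ℕ) = 0 then 1 else 0))
        = f y' - f ⟨0, hD⟩ := by
      intro f
      simp only [mul_sub, mul_ite, mul_one, mul_zero]
      rw [Finset.sum_sub_distrib, Finset.sum_ite_eq' Finset.univ y' f, if_pos (Finset.mem_univ _),
        sum_ite_val_zero hD]
    by_cases h : (y : ℕ) = 0
    · have hne : y ≠ y' := fun e => h' (e ▸ h)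
      simp only [qv, if_pos h]
      rw [key (fun _ => (D : ℝ)⁻¹)]
      simp [hne]
    · simp only [qv, if_neg h]
      rw [key (fun t => (if t = y then (1:ℝ) else 0) - (D : ℝ)⁻¹)]
      have hz : (⟨0, hD⟩ : Fin D) ≠ y := fun e => h (by simp [← e])
      rw [if_neg hz]
      by_cases hyy : y = y'
      · rw [if_pos (hyy.symm), if_pos hyy]; ring
      · rw [if_neg (fun e => hyy e.symm), if_neg hyy]; ring

lemma prod_shift {M : Type*} [CommMonoid M] (c : ℕ → M) (k m : ℕ) :
    ∏ i ∈ Finset.Ico k m, c (i + 1) = ∏ j ∈ Finset.Icc (k + 1) m, c j := by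
  refine Finset.prod_nbij' (fun i => i + 1) (fun j => j - 1) ?_ ?_ ?_ ?_ ?_ <;>
    simp only [Finset.mem_Ico, Finset.mem_Icc] <;> intro a ha
  · omega
  · omega
  · omega
  · omega
  · trivial

lemma tel (E : ℕ → ℝ) (K : ℕ) :
    ∑ k ∈ Finset.range (K + 1), (if k = 0 then E 1 else E (k + 1) - E k) = E (K + 1) := by
  induction K with
  | zero => simp
  | succ n ih => rw [Finset.sum_range_succ, ih, if_neg (Nat.succ_ne_zero n)]; ring

end OUAux


namespace OUAux

lemma prod_ite_lt {M : Type*} [CommMonoid M] (m k : ℕ) (c : ℕ → M) :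
    (∏ j : Fin m, (if (j : ℕ) < k then 1 else c ((j : ℕ) + 1)))
      = ∏ i ∈ Finset.Ico k m, c (i + 1) := by
  rw [Fin.prod_univ_eq_prod_range (fun i => if i < k then 1 else c (i + 1)) m,
    Finset.prod_ite, Finset.prod_const_one, one_mul]
  congr 1
  ext i
  simp only [Finset.mem_filter, Finset.mem_range, Finset.mem_Ico, not_lt]
  omega

lemma prod_delta {m : ℕ} {D : Fin m → Type*} [∀ k, DecidableEq (D k)] (a b : ∀ k, D k) :
    (∏ k : Fin m, (if a k = b k then (1:ℝ) else 0)) = if a = b then 1 else 0 := by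
  by_cases hab : a = b
  · subst hab; simp
  · rw [if_neg hab]
    obtain ⟨k, hk⟩ := Function.ne_iff.mp hab
    exact Finset.prod_eq_zero (Finset.mem_univ k) (if_neg hk)

end OUAux

/-- spectral decomposition of the OU covariance matrix on a symmetric tree
with `m` levels, branching degrees `d₁, …, d_m` and node ages `u₁ > ⋯ > u_m > u_{m+1} = 0`.
Tips are indexed by `ι = Π k, Fin d_{k+1}`; two tips whose first differing coordinate is `k`
have MRCA at level `k+1`, i.e. tree distance `2 u_{k+1}`, so
`(V_α)_{xy} = exp(-α d_{xy})`. There is a single eigenbasis `P`, independent of `α`,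
with eigenvalue `λ_k(α)` of multiplicity `d₁⋯d_{k-1}(d_k - 1)` for `1 ≤ k ≤ m` and top
eigenvalue `λ₀(α)` of multiplicity `1` with eigenvector `𝟙`. -/
theorem symmetric_tree_spectral_decomposition
    (m : ℕ) (hm : 1 ≤ m) (d : ℕ → ℕ) (hd : ∀ j, 1 ≤ j → j ≤ m → 2 ≤ d j)
    (u : ℕ → ℝ) (hu : ∀ i, 1 ≤ i → i ≤ m → u (i + 1) < u i) (hum : u (m + 1) = 0)
    (V : ℝ → Matrix ((k : Fin m) → Fin (d (k + 1))) ((k : Fin m) → Fin (d (k + 1))) ℝ)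
    (hVdiag : ∀ α x, V α x x = 1)
    (hVoff : ∀ α x y (k : Fin m), (∀ j : Fin m, j < k → x j = y j) → x k ≠ y k →
      V α x y = Real.exp (-α * (2 * u ((k : ℕ) + 1)))) :
    ∃ (P : Matrix ((k : Fin m) → Fin (d (k + 1))) ((k : Fin m) → Fin (d (k + 1))) ℝ)
      (lvl : ((k : Fin m) → Fin (d (k + 1))) → ℕ),
      IsUnit P.det ∧
      (∀ x, lvl x ≤ m) ∧
      Nat.card {x : (k : Fin m) → Fin (d (k + 1)) // lvl x = 0} = 1 ∧
      (∀ k, 1 ≤ k → k ≤ m →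
        Nat.card {x : (k : Fin m) → Fin (d (k + 1)) // lvl x = k} =
          (∏ j ∈ Finset.Ico 1 k, d j) * (d k - 1)) ∧
      (∀ α : ℝ, V α * P = P * Matrix.diagonal (fun x => ouLamFull m d u (lvl x) α)) ∧
      (∃ x₀, lvl x₀ = 0 ∧ ∀ i, P i x₀ = 1) ∧
      (∀ α : ℝ, 0 < α → ∀ k, 1 ≤ k → k ≤ m →
        ouLamFull m d u k α < ouLamFull m d u 0 α) := by
  classical
  have hd2 : ∀ j : Fin m, 2 ≤ d ((j : ℕ) + 1) := fun j => hd _ (by omega) (by omega)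
  let ι : Type := ((k : Fin m) → Fin (d (k + 1)))
  let P : Matrix ι ι ℝ := fun x y => ∏ k : Fin m, OUAux.wv (y k) (x k)
  let lvl : ι → ℕ := fun y =>
    Finset.univ.sup (fun j : Fin m => if ((y j : ℕ)) = 0 then 0 else (j : ℕ) + 1)
  have hlvl_le : ∀ (y : ι) (k : ℕ),
      lvl y ≤ k ↔ ∀ j : Fin m, k ≤ (j : ℕ) → ((y j : ℕ)) = 0 := by
    intro y k
    rw [show lvl y = Finset.univ.sup
        (fun j : Fin m => if ((y j : ℕ)) = 0 then 0 else (j : ℕ) + 1) from rfl,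
      Finset.sup_le_iff]
    constructor
    · intro h j hj
      have := h j (Finset.mem_univ j)
      by_contra h0
      rw [if_neg h0] at this; omega
    · intro h j _
      by_cases h0 : ((y j : ℕ)) = 0
      · simp [h0]
      · rw [if_neg h0]
        by_contra hc
        push_neg at hc
        exact h0 (h j (by omega))
  -- the all-zero tip
  let x₀ : ι := fun k => ⟨0, by have := hd2 k; omega⟩
  have hlvlx₀ : lvl x₀ = 0 := by
    have := (hlvl_le x₀ 0).mpr (fun j _ => rfl)
    omega
  have hlvl0 : ∀ y : ι, lvl y = 0 ↔ y = x₀ := by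
    intro y
    constructor
    · intro h
      funext j
      have := (hlvl_le y 0).mp (le_of_eq h) j (Nat.zero_le _)
      exact Fin.ext this
    · intro h; subst h; exact hlvlx₀
  have hlvlm : ∀ y : ι, lvl y ≤ m := by
    intro y
    rw [hlvl_le]
    intro j hj
    exact absurd j.isLt (by omega)
  refine ⟨P, lvl, ?_, hlvlm, ?_, ?_, ?_, ⟨x₀, hlvlx₀, ?_⟩, ?_⟩
  · -- invertibility
    apply Matrix.isUnit_det_of_left_inverse (B := Matrix.of fun y x => ∏ k : Fin m, OUAux.qv (y k) (x k))
    ext a b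
    rw [Matrix.mul_apply, Matrix.one_apply]
    simp only [Matrix.of_apply]
    have : ∀ x : ι, (∏ k : Fin m, OUAux.qv (a k) (x k)) * P x b
        = ∏ k : Fin m, (OUAux.qv (a k) (x k) * OUAux.wv (b k) (x k)) := by
      intro x; rw [Finset.prod_mul_distrib]
    simp_rw [this]
    have key := Finset.prod_univ_sum (fun _ : Fin m => (Finset.univ : Finset _))
      (fun (k : Fin m) (t : Fin (d ((k : ℕ) + 1))) => OUAux.qv (a k) t * OUAux.wv (b k) t)
    rw [Fintype.piFinset_univ] at key
    rw [← key]
    simp_rw [OUAux.sum_qw]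
    exact OUAux.prod_delta a b
  · -- multiplicity of level 0
    rw [Nat.card_eq_fintype_card]
    have : ∀ y : ι, lvl y = 0 ↔ y = x₀ := hlvl0
    rw [Fintype.card_eq_one_iff]
    exact ⟨⟨x₀, hlvlx₀⟩, fun y => Subtype.ext ((this y.1).mp y.2)⟩
  · -- multiplicities of level k ≥ 1
    intro k hk1 hk2
    let T : ∀ j : Fin m, Finset (Fin (d ((j : ℕ) + 1))) := fun j =>
      if ((j : ℕ) + 1) < k then Finset.univ
      else if ((j : ℕ) + 1) = k then Finset.univ.filter (fun t => (t : ℕ) ≠ 0)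
      else Finset.univ.filter (fun t => (t : ℕ) = 0)
    have hmemT : ∀ y : ι, lvl y = k ↔ ∀ j : Fin m, y j ∈ T j := by
      intro y
      constructor
      · intro h
        have hne : Nonempty (Fin m) := ⟨⟨0, by omega⟩⟩
        obtain ⟨j₀, -, hj₀⟩ := Finset.exists_mem_eq_sup Finset.univ
          (Finset.univ_nonempty) (fun j : Fin m => if ((y j : ℕ)) = 0 then 0 else (j : ℕ) + 1)
        have hj₀' : (if ((y j₀ : ℕ)) = 0 then 0 else (j₀ : ℕ) + 1) = k := hj₀.symm.trans h
        have hy₀ : ((y j₀ : ℕ)) ≠ 0 := by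
          intro h0; rw [if_pos h0] at hj₀'; omega
        rw [if_neg hy₀] at hj₀'
        intro j
        show y j ∈ T j
        by_cases hlt : ((j : ℕ) + 1) < k
        · simp [T, hlt]
        · by_cases heq : ((j : ℕ) + 1) = k
          · have : j = j₀ := Fin.ext (by omega)
            subst this
            simp [T, hlt, heq, hy₀]
          · have hle := (hlvl_le y k).mp (le_of_eq h) j (by omega)
            simp [T, hlt, heq, hle]
      · intro h
        have hub : lvl y ≤ k := by
          rw [hlvl_le]
          intro j hj
          have := h j
          have hlt : ¬ ((j : ℕ) + 1) < k := by omega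
          have heq : ¬ ((j : ℕ) + 1) = k := by omega
          simp only [T, if_neg hlt, if_neg heq, Finset.mem_filter] at this
          exact this.2
        have hlb : k ≤ lvl y := by
          let j₀ : Fin m := ⟨k - 1, by omega⟩
          have hj₀v : ((j₀ : ℕ) + 1) = k := by simp [j₀]; omega
          have := h j₀
          have hlt : ¬ ((j₀ : ℕ) + 1) < k := by omega
          simp only [T, if_neg hlt, if_pos hj₀v, Finset.mem_filter] at this
          have hle := Finset.le_sup (f := fun j : Fin m =>
            if ((y j : ℕ)) = 0 then 0 else (j : ℕ) + 1) (Finset.mem_univ j₀)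
          simp only [if_neg this.2] at hle
          show k ≤ Finset.univ.sup fun j : Fin m => if ((y j : ℕ)) = 0 then 0 else (j : ℕ) + 1
          omega
        omega
    rw [Nat.card_eq_fintype_card, Fintype.card_subtype]
    have hfe : (Finset.univ.filter fun y : ι => lvl y = k) = Fintype.piFinset T := by
      ext y
      simp only [Finset.mem_filter, Finset.mem_univ, true_and]
      exact (hmemT y).trans (Fintype.mem_piFinset).symm
    rw [hfe, Fintype.card_piFinset]
    have hcard1 : ∀ j : Fin m,
        (Finset.univ.filter (fun t : Fin (d ((j : ℕ) + 1)) => (t : ℕ) = 0)).card = 1 := by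
      intro j
      rw [Finset.card_eq_one]
      refine ⟨⟨0, by have := hd2 j; omega⟩, ?_⟩
      ext t
      simp [Fin.ext_iff]
    have hcardT : ∀ j : Fin m, (T j).card =
        (if (j : ℕ) + 1 < k then d ((j : ℕ) + 1)
          else if (j : ℕ) + 1 = k then d ((j : ℕ) + 1) - 1 else 1) := by
      intro j
      by_cases hlt : ((j : ℕ) + 1) < k
      · simp [T, hlt]
      · by_cases heq : ((j : ℕ) + 1) = k
        · have hsum := Finset.card_filter_add_card_filter_not
            (s := (Finset.univ : Finset (Fin (d ((j : ℕ) + 1)))))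
            (p := fun t => (t : ℕ) = 0)
          have h1 := hcard1 j
          have hcu : (Finset.univ : Finset (Fin (d ((j : ℕ) + 1)))).card = d ((j : ℕ) + 1) := by
            simp
          simp only [T, if_neg hlt, if_pos heq, ne_eq]
          omega
        · simp only [T, if_neg hlt, if_neg heq]
          exact hcard1 j
    calc ∏ j : Fin m, (T j).card
        = ∏ j : Fin m, (if ((j : ℕ)) < k - 1 then d ((j : ℕ) + 1)
            else if (j : ℕ) = k - 1 then d ((j : ℕ) + 1) - 1 else 1) := by
          refine Finset.prod_congr rfl fun j _ => ?_
          rw [hcardT j]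
          congr 1 <;> [skip; congr 1] <;> simp only [eq_iff_iff] <;> omega
      _ = (∏ j ∈ Finset.Ico 1 k, d j) * (d k - 1) := by
          rw [Fin.prod_univ_eq_prod_range
            (fun i => if i < k - 1 then d (i + 1) else if i = k - 1 then d (i + 1) - 1 else 1) m]
          rw [← Finset.prod_subset (Finset.range_subset_range.mpr hk2)
            (f := fun i => if i < k - 1 then d (i + 1) else if i = k - 1 then d (i + 1) - 1 else 1)
            (fun i _ hi => by
              rw [Finset.mem_range, not_lt] at hi
              show (if i < k - 1 then d (i + 1) else if i = k - 1 then d (i + 1) - 1 else 1) = 1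
              rw [if_neg (by omega), if_neg (by omega)])]
          rw [show Finset.range k = Finset.range ((k - 1) + 1) by congr 1; omega,
            Finset.prod_range_succ]
          have hg : (if k - 1 < k - 1 then d (k - 1 + 1)
              else if k - 1 = k - 1 then d (k - 1 + 1) - 1 else 1) = d k - 1 := by
            rw [if_neg (lt_irrefl _), if_pos rfl, show k - 1 + 1 = k by omega]
          have hprev : (∏ i ∈ Finset.range (k - 1),
              if i < k - 1 then d (i + 1) else if i = k - 1 then d (i + 1) - 1 else 1)
              = ∏ i ∈ Finset.range (k - 1), d (i + 1) :=
            Finset.prod_congr rfl fun i hi => if_pos (Finset.mem_range.mp hi)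
          have hIco : (∏ j ∈ Finset.Ico 1 k, d j) = ∏ i ∈ Finset.range (k - 1), d (1 + i) :=
            Finset.prod_Ico_eq_prod_range d 1 k
          rw [hg, hprev, hIco]
          exact congrArg (· * (d k - 1)) (Finset.prod_congr rfl fun i _ => by rw [Nat.add_comm])
  · -- eigen-equation
    intro α
    let E : ℕ → ℝ := fun k => Real.exp (-2 * α * u k)
    have hVform : ∀ x z : ι, V α x z = ∑ k ∈ Finset.range (m + 1),
        (if k = 0 then E 1 else E (k + 1) - E k) *
          (if (∀ j : Fin m, (j : ℕ) < k → x j = z j) then (1:ℝ) else 0) := by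
      intro x z
      by_cases hxz : x = z
      · subst hxz
        have h2 : ∀ k : ℕ, (if k = 0 then E 1 else E (k + 1) - E k) *
            (if (∀ j : Fin m, (j : ℕ) < k → x j = x j) then (1:ℝ) else 0)
            = (if k = 0 then E 1 else E (k + 1) - E k) :=
          fun k => by rw [if_pos (fun _ _ => rfl), mul_one]
        rw [Finset.sum_congr rfl fun k _ => h2 k, OUAux.tel E m, hVdiag]
        show (1:ℝ) = Real.exp (-2 * α * u (m + 1))
        rw [hum]
        norm_num
      · obtain ⟨j₁, hj₁⟩ := Function.ne_iff.mp hxz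
        have hSne : (Finset.univ.filter (fun j : Fin m => x j ≠ z j)).Nonempty :=
          ⟨j₁, Finset.mem_filter.mpr ⟨Finset.mem_univ _, hj₁⟩⟩
        set K := (Finset.univ.filter (fun j : Fin m => x j ≠ z j)).min' hSne with hK
        have hKmem := Finset.min'_mem _ hSne
        rw [Finset.mem_filter] at hKmem
        have hxK : x K ≠ z K := hKmem.2
        have hlt : ∀ j : Fin m, j < K → x j = z j := by
          intro j hj
          by_contra hne
          have := Finset.min'_le (Finset.univ.filter (fun j : Fin m => x j ≠ z j)) j
            (Finset.mem_filter.mpr ⟨Finset.mem_univ _, hne⟩)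
          exact absurd hj (not_lt.mpr this)
        have hVxz : V α x z = E ((K : ℕ) + 1) := by
          rw [hVoff α x z K hlt hxK]
          show _ = Real.exp (-2 * α * u ((K : ℕ) + 1))
          congr 1
          ring
        have hind : ∀ k : ℕ, (if (∀ j : Fin m, (j : ℕ) < k → x j = z j) then (1:ℝ) else 0)
            = if k ≤ (K : ℕ) then 1 else 0 := by
          intro k
          congr 1
          simp only [eq_iff_iff]
          constructor
          · intro h
            by_contra hk
            push_neg at hk
            exact hxK (h K (by omega))
          · intro hk j hj
            exact hlt j (by rw [Fin.lt_def]; omega)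
        simp only [hind, mul_ite, mul_one, mul_zero]
        rw [← Finset.sum_filter]
        have hKm := K.isLt
        rw [show (Finset.range (m + 1)).filter (fun k => k ≤ (K : ℕ))
            = Finset.range ((K : ℕ) + 1) by
          ext i
          simp only [Finset.mem_filter, Finset.mem_range]
          omega]
        rw [OUAux.tel E (K : ℕ)]
        exact hVxz
    have hsumf : ∀ (k : ℕ) (x y : ι),
        (∑ z : ι, (if (∀ j : Fin m, (j : ℕ) < k → x j = z j) then (1:ℝ) else 0) * P z y)
        = if lvl y ≤ k then (∏ i ∈ Finset.Icc (k + 1) m, (d i : ℝ)) * P x y else 0 := by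
      intro k x y
      have hsplit : ∀ z : ι,
          (if (∀ j : Fin m, (j : ℕ) < k → x j = z j) then (1:ℝ) else 0) * P z y
          = ∏ j : Fin m, ((if (j : ℕ) < k then (if z j = x j then (1:ℝ) else 0) else 1)
              * OUAux.wv (y j) (z j)) := by
        intro z
        rw [Finset.prod_mul_distrib]
        congr 1
        by_cases h : ∀ j : Fin m, (j : ℕ) < k → x j = z j
        · rw [if_pos h]
          exact (Finset.prod_eq_one fun j _ => by
            by_cases hj : (j : ℕ) < k
            · rw [if_pos hj, if_pos (h j hj).symm]
            · rw [if_neg hj]).symm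
        · rw [if_neg h]
          push_neg at h
          obtain ⟨j, hjk, hne⟩ := h
          exact (Finset.prod_eq_zero (Finset.mem_univ j) (by
            rw [if_pos hjk, if_neg (fun e => hne e.symm)])).symm
      simp_rw [hsplit]
      have key := Finset.prod_univ_sum (fun _ : Fin m => (Finset.univ : Finset _))
        (fun (j : Fin m) (t : Fin (d ((j : ℕ) + 1))) =>
          (if (j : ℕ) < k then (if t = x j then (1:ℝ) else 0) else 1) * OUAux.wv (y j) t)
      rw [Fintype.piFinset_univ] at key
      rw [← key]
      have hfac : ∀ j : Fin m,
          (∑ t : Fin (d ((j : ℕ) + 1)),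
            (if (j : ℕ) < k then (if t = x j then (1:ℝ) else 0) else 1) * OUAux.wv (y j) t)
          = if (j : ℕ) < k then OUAux.wv (y j) (x j)
            else (if ((y j : ℕ)) = 0 then (d ((j : ℕ) + 1) : ℝ) else 0) := by
        intro j
        by_cases hj : (j : ℕ) < k
        · rw [if_pos hj]
          simp only [if_pos hj, ite_mul, one_mul, zero_mul]
          rw [Finset.sum_ite_eq' Finset.univ (x j) (fun t => OUAux.wv (y j) t)]
          exact if_pos (Finset.mem_univ _)
        · rw [if_neg hj]
          simp only [if_neg hj, one_mul]
          exact OUAux.sum_wv (y j)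
      simp_rw [hfac]
      by_cases hL : lvl y ≤ k
      · rw [if_pos hL]
        have h0 : ∀ j : Fin m, k ≤ (j : ℕ) → ((y j : ℕ)) = 0 := (hlvl_le y k).mp hL
        have hthis : ∀ j : Fin m,
            (if (j : ℕ) < k then OUAux.wv (y j) (x j)
              else (if ((y j : ℕ)) = 0 then (d ((j : ℕ) + 1) : ℝ) else 0))
            = (if (j : ℕ) < k then 1 else (d ((j : ℕ) + 1) : ℝ)) * OUAux.wv (y j) (x j) := by
          intro j
          by_cases hj : (j : ℕ) < k
          · rw [if_pos hj, if_pos hj, one_mul]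
          · rw [if_neg hj, if_neg hj, if_pos (h0 j (by omega)),
              OUAux.wv_zero _ _ (h0 j (by omega)), mul_one]
        simp_rw [hthis]
        rw [Finset.prod_mul_distrib]
        congr 1
        rw [OUAux.prod_ite_lt m k (fun i => (d i : ℝ))]
        exact OUAux.prod_shift (fun i => (d i : ℝ)) k m
      · rw [if_neg hL]
        rw [hlvl_le] at hL
        push_neg at hL
        obtain ⟨j, hjk, hj0⟩ := hL
        refine Finset.prod_eq_zero (Finset.mem_univ j) ?_
        rw [if_neg (by omega), if_neg hj0]
    have hscal : ∀ L, L ≤ m → (∑ k ∈ Finset.range (m + 1), (if L ≤ k then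
        (if k = 0 then E 1 else E (k + 1) - E k) *
          ∏ i ∈ Finset.Icc (k + 1) m, (d i : ℝ) else 0))
        = ouLamFull m d u L α := by
      intro L hL
      rw [← Finset.sum_filter]
      rw [show (Finset.range (m + 1)).filter (fun k => L ≤ k) = Finset.Icc L m by
        ext i
        simp only [Finset.mem_filter, Finset.mem_range, Finset.mem_Icc]
        omega]
      by_cases hL0 : L = 0
      · subst hL0
        rw [show Finset.Icc 0 m = insert 0 (Finset.Icc 1 m) by
          ext i
          simp only [Finset.mem_insert, Finset.mem_Icc]
          omega]
        rw [Finset.sum_insert (by simp), ouLamFull, if_pos rfl, if_pos rfl, add_comm]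
        congr 1
        · rw [ouLam]
          refine Finset.sum_congr rfl fun k hk => ?_
          rw [Finset.mem_Icc] at hk
          rw [if_neg (by omega)]
          exact mul_comm _ _
        · show E 1 * ∏ i ∈ Finset.Icc (0 + 1) m, (d i : ℝ) = _
          rw [show (0:ℕ) + 1 = 1 from rfl]
          exact mul_comm _ _
      · rw [ouLamFull, if_neg hL0, ouLam]
        refine Finset.sum_congr rfl fun k hk => ?_
        rw [Finset.mem_Icc] at hk
        rw [if_neg (by omega)]
        exact mul_comm _ _
    ext x y
    rw [Matrix.mul_apply, Matrix.mul_diagonal]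
    calc ∑ z : ι, V α x z * P z y
        = ∑ z : ι, (∑ k ∈ Finset.range (m + 1),
            (if k = 0 then E 1 else E (k + 1) - E k) *
            (if (∀ j : Fin m, (j : ℕ) < k → x j = z j) then (1:ℝ) else 0)) * P z y := by
          refine Finset.sum_congr rfl fun z _ => ?_
          rw [hVform x z]
      _ = ∑ k ∈ Finset.range (m + 1), (if k = 0 then E 1 else E (k + 1) - E k) *
            ∑ z : ι, (if (∀ j : Fin m, (j : ℕ) < k → x j = z j) then (1:ℝ) else 0) * P z y := by
          simp_rw [Finset.sum_mul, mul_assoc]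
          rw [Finset.sum_comm]
          simp_rw [← Finset.mul_sum]
      _ = ∑ k ∈ Finset.range (m + 1), (if k = 0 then E 1 else E (k + 1) - E k) *
            (if lvl y ≤ k then (∏ i ∈ Finset.Icc (k + 1) m, (d i : ℝ)) * P x y else 0) := by
          simp_rw [hsumf]
      _ = (∑ k ∈ Finset.range (m + 1), (if lvl y ≤ k then
            (if k = 0 then E 1 else E (k + 1) - E k) *
              ∏ i ∈ Finset.Icc (k + 1) m, (d i : ℝ) else 0)) * P x y := by
          rw [Finset.sum_mul]
          refine Finset.sum_congr rfl fun k _ => ?_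
          by_cases h : lvl y ≤ k
          · rw [if_pos h, if_pos h]
            ring
          · rw [if_neg h, if_neg h, mul_zero, zero_mul]
      _ = ouLamFull m d u (lvl y) α * P x y := by
          rw [hscal (lvl y) (hlvlm y)]
      _ = P x y * ouLamFull m d u (lvl y) α := mul_comm _ _
  · -- eigenvector of ones
    intro i
    show (∏ k : Fin m, OUAux.wv (x₀ k) (i k)) = 1
    exact Finset.prod_eq_one fun k _ => OUAux.wv_zero _ _ rfl
  · -- top eigenvalue strictly largest
    intro α hα k hk1 hk2
    have hterm : ∀ i, 1 ≤ i → i ≤ m →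
        0 ≤ (∏ j ∈ Finset.Icc (i + 1) m, (d j : ℝ)) *
          (Real.exp (-2 * α * u (i + 1)) - Real.exp (-2 * α * u i)) := by
      intro i hi1 hi2
      apply mul_nonneg
      · exact Finset.prod_nonneg fun j _ => Nat.cast_nonneg _
      · have := hu i hi1 hi2
        have : Real.exp (-2 * α * u i) < Real.exp (-2 * α * u (i + 1)) :=
          Real.exp_lt_exp.mpr (by nlinarith)
        linarith
    have hle : ouLam m d u k α ≤ ouLam m d u 1 α := by
      apply Finset.sum_le_sum_of_subset_of_nonneg
      · exact Finset.Icc_subset_Icc_left hk1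
      · intro i hi _
        rw [Finset.mem_Icc] at hi
        exact hterm i hi.1 hi.2
    have hpos : 0 < (∏ j ∈ Finset.Icc 1 m, (d j : ℝ)) * Real.exp (-2 * α * u 1) := by
      apply mul_pos
      · apply Finset.prod_pos
        intro j hj
        rw [Finset.mem_Icc] at hj
        have := hd j hj.1 hj.2
        positivity
      · exact Real.exp_pos _
    rw [ouLamFull, ouLamFull, if_neg (by omega), if_pos rfl]
    linarith
end

section
/- (δ-method with different rates) If (aₙ(Xₙ − x), bₙ(Yₙ − y))ᵗ converges in distribution to N(0, Σ) with aₙ, bₙ → ∞, bₙ/aₙ → 0, Σ₂₂ > 0, and g : ℝ² → ℝ is continuously differentiable with ∂g/∂y(x,y) ≠ 0, then bₙ(g(Xₙ,Yₙ) − g(x,y)) converges in distribution to N(0, Σ₂₂·(∂g/∂y(x,y))²). -/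
open MeasureTheory ProbabilityTheory Filter BoundedContinuousFunction Set

namespace DeltaAux

variable {Ω : Type*} [MeasurableSpace Ω] {μ : Measure Ω} [IsProbabilityMeasure μ]

/-- Weak convergence against bounded continuous test functions. -/
def WeakConv (μ : Measure Ω) (W : ℕ → Ω → ℝ) (ρ : Measure ℝ) : Prop :=
  ∀ f : BoundedContinuousFunction ℝ ℝ,
    Tendsto (fun n => ∫ ω, f (W n ω) ∂μ) atTop (nhds (∫ z, f z ∂ρ))

/-- Convergence to zero in probability (real-valued form). -/
def TendsToZeroInProb (μ : Measure Ω) (V : ℕ → Ω → ℝ) : Prop :=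
  ∀ δ : ℝ, 0 < δ → Tendsto (fun n => (μ {ω | δ ≤ |V n ω|}).toReal) atTop (nhds 0)

lemma integrable_bcf_comp (f : BoundedContinuousFunction ℝ ℝ) {V : Ω → ℝ}
    (hV : Measurable V) : Integrable (fun ω => f (V ω)) μ := by
  refine (integrable_const ‖f‖).mono' ((f.continuous.measurable.comp hV).aestronglyMeasurable) ?_
  exact Filter.Eventually.of_forall fun ω => f.norm_coe_le_norm (V ω)

/-- The cutoff function `z ↦ min 1 (max 0 (|z| - K))` as a bounded continuous function. -/
noncomputable def cutoff (K : ℝ) : BoundedContinuousFunction ℝ ℝ :=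
  BoundedContinuousFunction.mkOfBound
    ⟨fun z => min 1 (max 0 (|z| - K)),
      (continuous_const.min ((continuous_const.max (continuous_abs.sub continuous_const))))⟩ 1
    (by
      intro z w
      have h1 : ∀ u : ℝ, (0:ℝ) ≤ min 1 (max 0 (|u| - K)) := fun u =>
        le_min one_pos.le (le_max_left _ _)
      have h2 : ∀ u : ℝ, min 1 (max 0 (|u| - K)) ≤ 1 := fun u => min_le_left _ _
      rw [Real.dist_eq]
      have := abs_sub_le_of_nonneg_of_le (h1 z) (h2 z) (h1 w) (h2 w)
      simpa using this)

lemma cutoff_nonneg (K : ℝ) (z : ℝ) : 0 ≤ cutoff K z :=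
  le_min one_pos.le (le_max_left _ _)

lemma cutoff_le_one (K : ℝ) (z : ℝ) : cutoff K z ≤ 1 := min_le_left _ _

lemma one_le_cutoff {K z : ℝ} (h : K + 1 ≤ |z|) : 1 ≤ cutoff K z := by
  have : (1:ℝ) ≤ |z| - K := by linarith
  show (1:ℝ) ≤ min 1 (max 0 (|z| - K))
  exact le_min le_rfl (le_max_of_le_right this)

lemma cutoff_eq_zero {K z : ℝ} (h : |z| < K) : cutoff K z = 0 := by
  show min 1 (max 0 (|z| - K)) = 0
  rw [max_eq_left (by linarith), min_eq_right (by norm_num)]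


lemma toReal_measure_union_le (A B : Set Ω) :
    (μ (A ∪ B)).toReal ≤ (μ A).toReal + (μ B).toReal := by
  rw [← ENNReal.toReal_add (measure_ne_top μ A) (measure_ne_top μ B)]
  exact ENNReal.toReal_mono
    (ENNReal.add_ne_top.2 ⟨measure_ne_top μ A, measure_ne_top μ B⟩) (measure_union_le A B)

lemma toReal_measure_mono {A B : Set Ω} (h : A ⊆ B) : (μ A).toReal ≤ (μ B).toReal :=
  ENNReal.toReal_mono (measure_ne_top μ B) (measure_mono h)

lemma measurableSet_abs_ge (W : Ω → ℝ) (hW : Measurable W) (M : ℝ) :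
    MeasurableSet {ω | M ≤ |W ω|} :=
  measurableSet_le measurable_const hW.abs

lemma toReal_measure_abs_ge_le_integral {W : Ω → ℝ} (hW : Measurable W) {K : ℝ} :
    (μ {ω | K + 1 ≤ |W ω|}).toReal ≤ ∫ ω, cutoff K (W ω) ∂μ := by
  have hms := measurableSet_abs_ge W hW (K + 1)
  change μ.real {ω | K + 1 ≤ |W ω|} ≤ _
  rw [← MeasureTheory.integral_indicator_one hms]
  refine integral_mono ((integrable_const (1:ℝ)).indicator hms) (integrable_bcf_comp _ hW) ?_
  intro ω
  by_cases hω : ω ∈ {ω | K + 1 ≤ |W ω|}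
  · rw [Set.indicator_of_mem hω]; exact one_le_cutoff hω
  · rw [Set.indicator_of_notMem hω]; exact cutoff_nonneg _ _

lemma integral_cutoff_le {ρ : Measure ℝ} [IsProbabilityMeasure ρ] (K : ℝ) :
    ∫ z, cutoff K z ∂ρ ≤ (ρ {z : ℝ | K ≤ |z|}).toReal := by
  have hms : MeasurableSet {z : ℝ | K ≤ |z|} :=
    measurableSet_le measurable_const measurable_abs
  change _ ≤ ρ.real {z : ℝ | K ≤ |z|}
  rw [← MeasureTheory.integral_indicator_one hms]
  refine integral_mono (integrable_bcf_comp _ measurable_id)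
    ((integrable_const (1:ℝ)).indicator hms) ?_
  intro z
  by_cases hz : z ∈ {z : ℝ | K ≤ |z|}
  · rw [Set.indicator_of_mem hz]; exact cutoff_le_one _ _
  · rw [Set.indicator_of_notMem hz]
    exact le_of_eq (cutoff_eq_zero (not_le.mp hz))

lemma tail_small {W : ℕ → Ω → ℝ} {ρ : Measure ℝ} [IsProbabilityMeasure ρ]
    (hW : ∀ n, Measurable (W n)) (h : WeakConv μ W ρ) {ε : ℝ} (hε : 0 < ε) :
    ∃ M : ℝ, 1 ≤ M ∧ ∀ᶠ n in atTop, (μ {ω | M ≤ |W n ω|}).toReal ≤ ε := by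
  -- choose K with small ρ-tail
  set s : ℕ → Set ℝ := fun k => {z : ℝ | (k : ℝ) ≤ |z|} with hs
  have hmeas : ∀ k, NullMeasurableSet (s k) ρ := fun k =>
    (measurableSet_le measurable_const measurable_abs).nullMeasurableSet
  have hanti : Antitone s := by
    intro k l hkl z hz
    exact le_trans ((Nat.cast_le (α := ℝ)).2 hkl) hz
  have hempty : ⋂ k, s k = (∅ : Set ℝ) := by
    ext z
    simp only [Set.mem_iInter, Set.mem_empty_iff_false, iff_false, not_forall]
    obtain ⟨k, hk⟩ := exists_nat_gt |z|
    exact ⟨k, by simp [hs, not_le.2 hk]⟩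
  have htend : Tendsto (ρ ∘ s) atTop (nhds 0) := by
    have := tendsto_measure_iInter_atTop hmeas hanti ⟨0, measure_ne_top _ _⟩
    rwa [hempty, measure_empty] at this
  have hlt : ∀ᶠ k in atTop, ρ (s k) < ENNReal.ofReal (ε / 2) :=
    htend.eventually_lt_const (by simp [hε.le, ENNReal.ofReal_pos.2 (half_pos hε)])
  obtain ⟨k, hk⟩ := hlt.exists
  have hρtail : (ρ (s k)).toReal ≤ ε / 2 := by
    have := (ENNReal.toReal_lt_toReal (measure_ne_top _ _) ENNReal.ofReal_ne_top).2 hk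
    rw [ENNReal.toReal_ofReal (half_pos hε).le] at this
    exact this.le
  -- use cutoff k
  have hint : ∫ z, cutoff (k : ℝ) z ∂ρ ≤ ε / 2 :=
    le_trans (integral_cutoff_le _) hρtail
  have hev : ∀ᶠ n in atTop, ∫ ω, cutoff (k : ℝ) (W n ω) ∂μ ≤ ε := by
    have := (h (cutoff (k : ℝ))).eventually
      (eventually_le_nhds (show ∫ z, cutoff (k:ℝ) z ∂ρ < ε/2 + ε/2 by linarith [hint, half_pos hε]))
    filter_upwards [this] with n hn
    linarith [hn]
  refine ⟨(k : ℝ) + 1, by linarith [Nat.cast_nonneg (α := ℝ) k], ?_⟩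
  filter_upwards [hev] with n hn
  exact le_trans (toReal_measure_abs_ge_le_integral (hW n)) hn


lemma tendsToZeroInProb_of_subset {W V : ℕ → Ω → ℝ} {ρ : Measure ℝ} [IsProbabilityMeasure ρ]
    (hW : ∀ n, Measurable (W n)) (h : WeakConv μ W ρ)
    (hsub : ∀ δ : ℝ, 0 < δ → ∀ M : ℝ, ∀ᶠ n in atTop,
      {ω | δ ≤ |V n ω|} ⊆ {ω | M ≤ |W n ω|}) :
    TendsToZeroInProb μ V := by
  intro δ hδ
  rw [NormedAddCommGroup.tendsto_nhds_zero]
  intro ε hε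
  obtain ⟨M, _, hM⟩ := tail_small hW h (half_pos hε)
  filter_upwards [hM, hsub δ hδ M] with n h1 h2
  rw [Real.norm_eq_abs, abs_of_nonneg ENNReal.toReal_nonneg]
  exact lt_of_le_of_lt (le_trans (toReal_measure_mono h2) h1) (half_lt_self hε)

lemma TendsToZeroInProb.add {A B : ℕ → Ω → ℝ} (hA : TendsToZeroInProb μ A)
    (hB : TendsToZeroInProb μ B) :
    TendsToZeroInProb μ (fun n ω => A n ω + B n ω) := by
  intro δ hδ
  have hsub : ∀ n, {ω | δ ≤ |A n ω + B n ω|} ⊆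
      {ω | δ / 2 ≤ |A n ω|} ∪ {ω | δ / 2 ≤ |B n ω|} := by
    intro n ω hω
    simp only [Set.mem_setOf_eq] at hω
    rw [Set.mem_union]
    by_contra hc
    push_neg at hc
    simp only [Set.mem_setOf_eq, not_le] at hc
    have habs := abs_add_le (A n ω) (B n ω)
    linarith [hc.1, hc.2]
  have hlim := (hA (δ/2) (half_pos hδ)).add (hB (δ/2) (half_pos hδ))
  rw [add_zero] at hlim
  refine squeeze_zero (fun n => ENNReal.toReal_nonneg) (fun n => ?_) hlim
  exact le_trans (toReal_measure_mono (hsub n)) (toReal_measure_union_le _ _)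

lemma TendsToZeroInProb.const_mul {A : ℕ → Ω → ℝ} (hA : TendsToZeroInProb μ A) (c : ℝ) :
    TendsToZeroInProb μ (fun n ω => c * A n ω) := by
  intro δ hδ
  rcases eq_or_ne c 0 with rfl | hc
  · have hempty : ∀ n, {ω | δ ≤ |(0:ℝ) * A n ω|} = (∅ : Set Ω) := by
      intro n; ext ω; simp [hδ.not_ge]
    simp only [hempty, measure_empty, ENNReal.toReal_zero]
    exact tendsto_const_nhds
  · have hpos : 0 < δ / |c| := div_pos hδ (abs_pos.2 hc)
    refine squeeze_zero (fun n => ENNReal.toReal_nonneg)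
      (fun n => toReal_measure_mono ?_) (hA _ hpos)
    intro ω hω
    simp only [Set.mem_setOf_eq] at hω ⊢
    rw [abs_mul] at hω
    rw [div_le_iff₀ (abs_pos.2 hc)]
    exact (mul_comm |c| _) ▸ hω

lemma slutsky {U R : ℕ → Ω → ℝ} {γ : Measure ℝ} [IsProbabilityMeasure γ]
    (hU : ∀ n, Measurable (U n)) (hR : ∀ n, Measurable (R n))
    (hUc : WeakConv μ U γ) (hRp : TendsToZeroInProb μ R) :
    WeakConv μ (fun n ω => U n ω + R n ω) γ := by
  intro f
  have hdiff : Tendsto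
      (fun n => (∫ ω, f (U n ω + R n ω) ∂μ) - ∫ ω, f (U n ω) ∂μ) atTop (nhds 0) := by
    rw [NormedAddCommGroup.tendsto_nhds_zero]
    intro ε hε
    set ε' : ℝ := ε / (3 * (2 * ‖f‖ + 1)) with hε'def
    have hfn : (0:ℝ) ≤ ‖f‖ := norm_nonneg f
    have hε'pos : 0 < ε' := div_pos hε (by positivity)
    obtain ⟨M, hM1, hMev⟩ := tail_small hU hUc hε'pos
    have hK : IsCompact (Set.Icc (-(M+1)) (M+1)) := isCompact_Icc
    have hUC : UniformContinuousOn f (Set.Icc (-(M+1)) (M+1)) :=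
      hK.uniformContinuousOn_of_continuous f.continuous.continuousOn
    rw [Metric.uniformContinuousOn_iff] at hUC
    obtain ⟨δ0, hδ0, hδ⟩ := hUC ε' hε'pos
    set δ : ℝ := min δ0 1 with hδdef
    have hδpos : 0 < δ := lt_min hδ0 one_pos
    have hRev : ∀ᶠ n in atTop, (μ {ω | δ ≤ |R n ω|}).toReal ≤ ε' :=
      (hRp δ hδpos).eventually (eventually_le_nhds hε'pos)
    filter_upwards [hMev, hRev] with n h1 h2
    set S : Set Ω := {ω | M ≤ |U n ω|} ∪ {ω | δ ≤ |R n ω|} with hSdef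
    have hSmeas : MeasurableSet S :=
      (measurableSet_abs_ge _ (hU n) M).union (measurableSet_abs_ge _ (hR n) δ)
    have hint1 : Integrable (fun ω => f (U n ω + R n ω)) μ :=
      integrable_bcf_comp f ((hU n).add (hR n))
    have hint2 : Integrable (fun ω => f (U n ω)) μ := integrable_bcf_comp f (hU n)
    have hptw : ∀ ω, ‖f (U n ω + R n ω) - f (U n ω)‖ ≤
        S.indicator (fun _ => 2 * ‖f‖) ω + ε' := by
      intro ω
      by_cases hωS : ω ∈ S
      · rw [Set.indicator_of_mem hωS]
        have := norm_sub_le (f (U n ω + R n ω)) (f (U n ω))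
        have b1 := f.norm_coe_le_norm (U n ω + R n ω)
        have b2 := f.norm_coe_le_norm (U n ω)
        linarith [hε'pos.le]
      · rw [Set.indicator_of_notMem hωS, zero_add]
        simp only [hSdef, Set.mem_union, Set.mem_setOf_eq, not_or, not_le] at hωS
        obtain ⟨hU', hR'⟩ := hωS
        have hδ1 : δ ≤ 1 := min_le_right _ _
        have hmem1 : U n ω + R n ω ∈ Set.Icc (-(M+1)) (M+1) := by
          constructor <;> [nlinarith [abs_lt.1 hU', abs_lt.1 hR'];
            nlinarith [abs_lt.1 hU', abs_lt.1 hR']]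
        have hmem2 : U n ω ∈ Set.Icc (-(M+1)) (M+1) := by
          constructor <;> [nlinarith [abs_lt.1 hU']; nlinarith [abs_lt.1 hU']]
        have hdist : dist (U n ω + R n ω) (U n ω) < δ0 := by
          rw [Real.dist_eq]
          have : U n ω + R n ω - U n ω = R n ω := by ring
          rw [this]
          exact lt_of_lt_of_le hR' (min_le_left _ _)
        have := hδ _ hmem1 _ hmem2 hdist
        rw [dist_eq_norm] at this
        exact this.le
    have hbound : ‖(∫ ω, f (U n ω + R n ω) ∂μ) - ∫ ω, f (U n ω) ∂μ‖ ≤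
        2 * ‖f‖ * (μ S).toReal + ε' := by
      rw [← integral_sub hint1 hint2]
      refine le_trans (norm_integral_le_integral_norm _) ?_
      have hintb : Integrable (fun ω => S.indicator (fun _ => 2 * ‖f‖) ω + ε') μ :=
        ((integrable_const (2 * ‖f‖)).indicator hSmeas).add (integrable_const ε')
      refine le_trans (integral_mono (hint1.sub hint2).norm hintb hptw) ?_
      rw [integral_add ((integrable_const (2 * ‖f‖)).indicator hSmeas) (integrable_const ε'),
        integral_indicator_const _ hSmeas, integral_const]
      simp [smul_eq_mul, mul_comm]
      exact le_rfl
    have hμS : (μ S).toReal ≤ ε' + ε' :=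
      le_trans (toReal_measure_union_le _ _) (add_le_add h1 h2)
    have hfin : 2 * ‖f‖ * (μ S).toReal + ε' < ε := by
      have h3 : 2 * ‖f‖ * (μ S).toReal ≤ 2 * ‖f‖ * (ε' + ε') :=
        mul_le_mul_of_nonneg_left hμS (by positivity)
      have h4 : ε' * (3 * (2 * ‖f‖ + 1)) = ε := div_mul_cancel₀ ε (by positivity)
      nlinarith [hε'pos]
    exact lt_of_le_of_lt hbound hfin
  have := hdiff.add (hUc f)
  rw [zero_add] at this
  simpa using this

end DeltaAux

open DeltaAux in
/-- δ-method with different rates. Convergence in distribution is expressed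
via integrals of bounded continuous functions; the limiting centered bivariate Gaussian
with covariance `Σ` is characterized by the Cramér–Wold device. -/
theorem delta_method_two_rates {Ω : Type*} [MeasurableSpace Ω] (μ : Measure Ω)
    [IsProbabilityMeasure μ]
    (X Y : ℕ → Ω → ℝ) (hX : ∀ n, Measurable (X n)) (hY : ∀ n, Measurable (Y n))
    (x y : ℝ) (a b : ℕ → ℝ)
    (ha : Tendsto a atTop atTop) (hb : Tendsto b atTop atTop)
    (hba : Tendsto (fun n => b n / a n) atTop (nhds 0))
    (S11 S12 S22 : ℝ) (hS22 : 0 < S22)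
    (ν : Measure (ℝ × ℝ)) [IsProbabilityMeasure ν]
    (hν : ∀ s t : ℝ, Measure.map (fun p : ℝ × ℝ => s * p.1 + t * p.2) ν =
      gaussianReal 0 (s ^ 2 * S11 + 2 * s * t * S12 + t ^ 2 * S22).toNNReal)
    (hconv : ∀ f : BoundedContinuousFunction (ℝ × ℝ) ℝ,
      Tendsto (fun n => ∫ ω, f (a n * (X n ω - x), b n * (Y n ω - y)) ∂μ) atTop
        (nhds (∫ p, f p ∂ν)))
    (g : ℝ × ℝ → ℝ) (hg : ContDiff ℝ 1 g)
    (hgy : fderiv ℝ g (x, y) (0, 1) ≠ 0) :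
    ∀ f : BoundedContinuousFunction ℝ ℝ,
      Tendsto (fun n => ∫ ω, f (b n * (g (X n ω, Y n ω) - g (x, y))) ∂μ) atTop
        (nhds (∫ z, f z ∂(gaussianReal 0 (S22 * (fderiv ℝ g (x, y) (0, 1)) ^ 2).toNNReal))) := by
  classical
  have hgc : Continuous g := hg.continuous
  set D : ℝ × ℝ →L[ℝ] ℝ := fderiv ℝ g (x, y) with hDdef
  set c : ℝ := D (0, 1) with hcdef
  set c1 : ℝ := D (1, 0) with hc1def
  set W : ℕ → Ω → ℝ := fun n ω => a n * (X n ω - x) with hWdef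
  set Z : ℕ → Ω → ℝ := fun n ω => b n * (Y n ω - y) with hZdef
  have hWmeas : ∀ n, Measurable (W n) := fun n =>
    measurable_const.mul ((hX n).sub measurable_const)
  have hZmeas : ∀ n, Measurable (Z n) := fun n =>
    measurable_const.mul ((hY n).sub measurable_const)
  haveI hν1 : IsProbabilityMeasure (ν.map Prod.fst) :=
    Measure.isProbabilityMeasure_map measurable_fst.aemeasurable
  have hWconv : WeakConv μ W (ν.map Prod.fst) := by
    intro f
    have h := hconv (f.compContinuous ⟨Prod.fst, continuous_fst⟩)
    rw [integral_map measurable_fst.aemeasurable f.continuous.measurable.aestronglyMeasurable]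
    exact h
  have hmap2 : ν.map Prod.snd = gaussianReal 0 S22.toNNReal := by
    have h01 := hν 0 1
    have heq : (fun p : ℝ × ℝ => (0:ℝ) * p.1 + 1 * p.2) = Prod.snd := by
      funext q; simp
    rw [heq] at h01
    rw [h01]
    norm_num
  have hZconv : WeakConv μ Z (gaussianReal 0 S22.toNNReal) := by
    intro f
    have h := hconv (f.compContinuous ⟨Prod.snd, continuous_snd⟩)
    rw [← hmap2,
      integral_map measurable_snd.aemeasurable f.continuous.measurable.aestronglyMeasurable]
    exact h
  -- growth of a n / b n
  have hab : Tendsto (fun n => a n / b n) atTop atTop := by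
    have hpos : ∀ᶠ n in atTop, b n / a n ∈ Set.Ioi (0:ℝ) := by
      filter_upwards [ha.eventually_gt_atTop 0, hb.eventually_gt_atTop 0] with n h1 h2
      exact div_pos h2 h1
    have h0 : Tendsto (fun n => b n / a n) atTop (nhdsWithin 0 (Set.Ioi 0)) :=
      tendsto_nhdsWithin_of_tendsto_nhds_of_eventually_within _ hba hpos
    have := h0.inv_tendsto_nhdsGT_zero
    have heq : (fun n => b n / a n)⁻¹ = fun n => a n / b n := by
      funext n; simp [Pi.inv_apply, inv_div]
    rwa [heq] at this
  -- convergence in probability of the elementary pieces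
  have hV1 : TendsToZeroInProb μ (fun n ω => X n ω - x) := by
    refine tendsToZeroInProb_of_subset hWmeas hWconv ?_
    intro δ hδ M
    filter_upwards [ha.eventually_ge_atTop (max (M / δ) 0)] with n hn ω hω
    simp only [Set.mem_setOf_eq] at hω ⊢
    have ha0 : 0 ≤ a n := le_trans (le_max_right _ _) hn
    have h1 : M / δ ≤ a n := le_trans (le_max_left _ _) hn
    calc M ≤ a n * δ := (div_le_iff₀ hδ).1 h1
      _ ≤ a n * |X n ω - x| := mul_le_mul_of_nonneg_left hω ha0
      _ = |W n ω| := by rw [hWdef]; rw [abs_mul, abs_of_nonneg ha0]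
  have hV2 : TendsToZeroInProb μ (fun n ω => Y n ω - y) := by
    refine tendsToZeroInProb_of_subset hZmeas hZconv ?_
    intro δ hδ M
    filter_upwards [hb.eventually_ge_atTop (max (M / δ) 0)] with n hn ω hω
    simp only [Set.mem_setOf_eq] at hω ⊢
    have hb0 : 0 ≤ b n := le_trans (le_max_right _ _) hn
    have h1 : M / δ ≤ b n := le_trans (le_max_left _ _) hn
    calc M ≤ b n * δ := (div_le_iff₀ hδ).1 h1
      _ ≤ b n * |Y n ω - y| := mul_le_mul_of_nonneg_left hω hb0
      _ = |Z n ω| := by rw [hZdef]; rw [abs_mul, abs_of_nonneg hb0]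
  have hV3 : TendsToZeroInProb μ (fun n ω => b n * (X n ω - x)) := by
    refine tendsToZeroInProb_of_subset hWmeas hWconv ?_
    intro δ hδ M
    filter_upwards [hab.eventually_ge_atTop (max (M / δ) 0),
      hb.eventually_gt_atTop 0, ha.eventually_gt_atTop 0] with n hn hbn han ω hω
    simp only [Set.mem_setOf_eq] at hω ⊢
    have hr0 : 0 ≤ a n / b n := le_trans (le_max_right _ _) hn
    have h1 : M / δ ≤ a n / b n := le_trans (le_max_left _ _) hn
    have hid : W n ω = (a n / b n) * (b n * (X n ω - x)) := by
      rw [hWdef]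
      field_simp
    calc M ≤ (a n / b n) * δ := (div_le_iff₀ hδ).1 h1
      _ ≤ (a n / b n) * |b n * (X n ω - x)| := mul_le_mul_of_nonneg_left hω hr0
      _ = |W n ω| := by rw [hid, abs_mul (a n / b n), abs_of_nonneg hr0]
  -- the derivative
  have hdiffat : DifferentiableAt ℝ g (x, y) := (hg.differentiable one_ne_zero).differentiableAt
  have hD : HasFDerivAt g D (x, y) := hdiffat.hasFDerivAt
  have hDdec : ∀ u v : ℝ, D (u, v) = u * c1 + v * c := by
    intro u v
    have huv : ((u, v) : ℝ × ℝ) = u • ((1:ℝ), (0:ℝ)) + v • ((0:ℝ), (1:ℝ)) := by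
      simp [Prod.ext_iff]
    rw [huv, map_add, D.map_smul, D.map_smul, smul_eq_mul, smul_eq_mul, ← hc1def, ← hcdef]
  -- the remainder term
  set E : ℕ → Ω → ℝ := fun n ω =>
    b n * (g (X n ω, Y n ω) - g (x, y) - D (X n ω - x, Y n ω - y)) with hEdef
  have hE : TendsToZeroInProb μ E := by
    intro δ hδ
    rw [NormedAddCommGroup.tendsto_nhds_zero]
    intro ε hε
    have hε5 : 0 < ε / 5 := by positivity
    obtain ⟨K, hK1, hKev⟩ := tail_small hZmeas hZconv hε5
    have hK0 : 0 < K := lt_of_lt_of_le one_pos hK1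
    set η : ℝ := δ / (2 * K) with hηdef
    have hη : 0 < η := by positivity
    have hev := hD.isLittleO.def hη
    rw [Metric.eventually_nhds_iff] at hev
    obtain ⟨ρ0, hρ0, hball⟩ := hev
    have hrem : ∀ u v : ℝ, |u| < ρ0 → |v| < ρ0 →
        |g (x + u, y + v) - g (x, y) - D (u, v)| ≤ η * max |u| |v| := by
      intro u v hu hv
      have hdist : dist ((x + u, y + v) : ℝ × ℝ) (x, y) < ρ0 := by
        rw [Prod.dist_eq]
        simp only [Real.dist_eq, add_sub_cancel_left]
        exact max_lt hu hv
      have := hball hdist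
      simp only [Prod.mk_sub_mk, add_sub_cancel_left, Prod.norm_def, Real.norm_eq_abs] at this
      exact this
    have hV1ev := (hV1 ρ0 hρ0).eventually (eventually_le_nhds hε5)
    have hV2ev := (hV2 ρ0 hρ0).eventually (eventually_le_nhds hε5)
    have hV3ev := (hV3 K hK0).eventually (eventually_le_nhds hε5)
    filter_upwards [hV1ev, hV2ev, hV3ev, hKev, hb.eventually_ge_atTop 0]
      with n h1 h2 h3 h4 hb0
    have hsub : {ω | δ ≤ |E n ω|} ⊆
        {ω | ρ0 ≤ |X n ω - x|} ∪ {ω | ρ0 ≤ |Y n ω - y|} ∪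
          {ω | K ≤ |b n * (X n ω - x)|} ∪ {ω | K ≤ |Z n ω|} := by
      intro ω hω
      simp only [Set.mem_setOf_eq] at hω
      by_contra hc
      simp only [Set.mem_union, Set.mem_setOf_eq, not_or, not_le] at hc
      obtain ⟨⟨⟨hu, hv⟩, h3'⟩, h4'⟩ := hc
      rw [hZdef] at h4'
      have hxy : ((x + (X n ω - x), y + (Y n ω - y)) : ℝ × ℝ) = (X n ω, Y n ω) := by
        simp
      have hbd := hrem (X n ω - x) (Y n ω - y) hu hv
      rw [hxy] at hbd
      have hmax : b n * max |X n ω - x| |Y n ω - y| < K := by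
        rw [mul_max_of_nonneg _ _ hb0]
        refine max_lt ?_ ?_
        · calc b n * |X n ω - x| = |b n * (X n ω - x)| := by
                rw [abs_mul, abs_of_nonneg hb0]
          _ < K := h3'
        · calc b n * |Y n ω - y| = |b n * (Y n ω - y)| := by
                rw [abs_mul, abs_of_nonneg hb0]
          _ < K := h4'
      have hEbd : |E n ω| ≤ η * (b n * max |X n ω - x| |Y n ω - y|) := by
        rw [hEdef]
        rw [abs_mul, abs_of_nonneg hb0]
        calc b n * |g (X n ω, Y n ω) - g (x, y) - D (X n ω - x, Y n ω - y)|
            ≤ b n * (η * max |X n ω - x| |Y n ω - y|) :=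
              mul_le_mul_of_nonneg_left hbd hb0
          _ = η * (b n * max |X n ω - x| |Y n ω - y|) := by ring
      have hfin : |E n ω| ≤ η * K := by
        refine le_trans hEbd ?_
        exact mul_le_mul_of_nonneg_left hmax.le hη.le
      have : η * K = δ / 2 := by
        rw [hηdef]
        field_simp
      rw [this] at hfin
      linarith
    rw [Real.norm_eq_abs, abs_of_nonneg ENNReal.toReal_nonneg]
    calc (μ {ω | δ ≤ |E n ω|}).toReal
        ≤ (μ ({ω | ρ0 ≤ |X n ω - x|} ∪ {ω | ρ0 ≤ |Y n ω - y|} ∪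
            {ω | K ≤ |b n * (X n ω - x)|} ∪ {ω | K ≤ |Z n ω|})).toReal :=
          toReal_measure_mono hsub
      _ ≤ (μ {ω | ρ0 ≤ |X n ω - x|}).toReal + (μ {ω | ρ0 ≤ |Y n ω - y|}).toReal +
            (μ {ω | K ≤ |b n * (X n ω - x)|}).toReal + (μ {ω | K ≤ |Z n ω|}).toReal := by
          refine le_trans (toReal_measure_union_le _ _) (add_le_add ?_ le_rfl)
          refine le_trans (toReal_measure_union_le _ _) (add_le_add ?_ le_rfl)
          exact toReal_measure_union_le _ _
      _ ≤ ε / 5 + ε / 5 + ε / 5 + ε / 5 := by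
          exact add_le_add (add_le_add (add_le_add h1 h2) h3) h4
      _ < ε := by linarith
  -- the full remainder
  set R : ℕ → Ω → ℝ := fun n ω => c1 * (b n * (X n ω - x)) + E n ω with hRdef
  have hRzero : TendsToZeroInProb μ R := (hV3.const_mul c1).add hE
  have hRmeas : ∀ n, Measurable (R n) := by
    intro n
    have hpair : Measurable (fun ω => ((X n ω - x, Y n ω - y) : ℝ × ℝ)) :=
      ((hX n).sub measurable_const).prodMk ((hY n).sub measurable_const)
    have hpairXY : Measurable (fun ω => ((X n ω, Y n ω) : ℝ × ℝ)) :=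
      (hX n).prodMk (hY n)
    exact (measurable_const.mul (measurable_const.mul ((hX n).sub measurable_const))).add
      (measurable_const.mul (((hgc.measurable.comp hpairXY).sub measurable_const).sub
        (D.continuous.measurable.comp hpair)))
  have hkey : ∀ n ω, b n * (g (X n ω, Y n ω) - g (x, y)) = c * Z n ω + R n ω := by
    intro n ω
    simp only [hRdef, hEdef, hZdef]
    rw [hDdec (X n ω - x) (Y n ω - y)]
    ring
  -- weak convergence of the leading term
  have hγ' : (gaussianReal 0 S22.toNNReal).map (fun z => c * z) =
      gaussianReal 0 (S22 * c ^ 2).toNNReal := by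
    rw [gaussianReal_map_const_mul c]
    congr 1
    · simp
    · apply NNReal.coe_injective
      simp only [NNReal.coe_mul, NNReal.coe_mk]
      rw [Real.coe_toNNReal (S22 * c ^ 2) (mul_nonneg hS22.le (sq_nonneg c)),
        Real.coe_toNNReal S22 hS22.le]
      ring
  have hUconv : WeakConv μ (fun n ω => c * Z n ω)
      (gaussianReal 0 (S22 * c ^ 2).toNNReal) := by
    intro f
    have h := hZconv (f.compContinuous ⟨fun z => c * z, continuous_const.mul continuous_id⟩)
    rw [← hγ', integral_map (measurable_const_mul c).aemeasurable
      f.continuous.measurable.aestronglyMeasurable]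
    exact h
  have hfinal := slutsky (fun n => measurable_const.mul (hZmeas n)) hRmeas hUconv hRzero
  intro f
  have hcongr : (fun n => ∫ ω, f (b n * (g (X n ω, Y n ω) - g (x, y))) ∂μ) =
      fun n => ∫ ω, f (c * Z n ω + R n ω) ∂μ := by
    funext n
    apply integral_congr_ae
    filter_upwards with ω
    rw [hkey n ω]
  rw [hcongr]
  exact hfinal f
end
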